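/- arXiv:1805.02967 — 11 statements merged into one kernel-verified Lean document; each statement's English description precedes it below -/
import Mathlib

section
/- The vertices of the chain polytope C(Π) of a finite poset Π are exactly the characteristic functions of antichains of Π. In particular, the number of vertices of C(Π) equals the number of antichains of Π. -/
/-!
Antichain indicators lie in `chainPoly α` because a chain meets an antichain at most once, and
they are extreme points there because `chainPoly α` sits inside the unit cube, whose vertices they
are.

Conversely, let `A` be the set of maximal elements of the support of `g` and `c` the least
value of `g` on `A`. A chain avoiding `A` can be extended by a point of `A`, so `g - c • 1_A`
has chain sums at most `t - c` when those of `g` are at most `t`, and its support is smaller.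
Induction on the support, run on the dilates `{g ≥ 0 | chain sums ≤ t} = t • chainPoly α`,
puts `chainPoly α` inside the convex hull of the antichain indicators, whose extreme points are
among the generators.
-/

/-- The chain polytope of a finite poset `α`, as a subset of `α → ℝ`:
nonnegative functions whose sum along every chain is at most 1. -/
def chainPoly (α : Type*) [PartialOrder α] [Fintype α] : Set (α → ℝ) :=
  {g | (∀ i, 0 ≤ g i) ∧ ∀ s : Finset α, IsChain (· ≤ ·) (s : Set α) → ∑ i ∈ s, g i ≤ 1}

section

open Finset Set Pointwise

variable {α : Type*} [PartialOrder α]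

def ChainSumsLE (g : α → ℝ) (t : ℝ) : Prop :=
  ∀ s : Finset α, IsChain (· ≤ ·) (s : Set α) → ∑ i ∈ s, g i ≤ t

lemma exists_maximal_isChain_insert [Finite α] {p : α → Prop} {s : Finset α}
    (hs : IsChain (· ≤ ·) (s : Set α)) (hsp : ∀ i ∈ s, p i) {x : α} (hx : p x) :
    ∃ a, Maximal p a ∧ IsChain (· ≤ ·) (insert a (s : Set α)) := by
  obtain rfl | hne := s.eq_empty_or_nonempty
  · obtain ⟨a, -, ha⟩ := Finite.exists_le_maximal hx
    exact ⟨a, ha, by simp⟩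
  obtain ⟨m, hm⟩ := Finset.exists_maximal hne
  obtain ⟨a, hma, ha⟩ := Finite.exists_le_maximal (hsp m hm.prop)
  have hle : ∀ b ∈ s, b ≤ m := fun b hb ↦
    (hs.total (mem_coe.2 hb) (mem_coe.2 hm.prop)).elim id fun h ↦ hm.le_of_ge hb h
  exact ⟨a, ha, hs.insert fun b hb _ ↦ Or.inr ((hle b hb).trans hma)⟩

lemma ChainSumsLE.exists_maximal_add_sum_le [Finite α] {g : α → ℝ} {t : ℝ}
    (hg : ChainSumsLE g t) {s : Finset α} (hs : IsChain (· ≤ ·) (s : Set α))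
    (hs_max : ∀ i ∈ s, ¬Maximal (g · ≠ 0) i)
    {x : α} (hx : g x ≠ 0) :
    ∃ a, Maximal (g · ≠ 0) a ∧ g a + ∑ i ∈ s, g i ≤ t := by
  classical
  set s' := s.filter (g · ≠ 0)
  obtain ⟨a, ha, hchain⟩ := exists_maximal_isChain_insert (s := s')
    (hs.mono (coe_subset.2 (filter_subset _ _))) (fun i hi ↦ (mem_filter.1 hi).2) hx
  have has' : a ∉ s' := fun h ↦ hs_max a (mem_filter.1 h).1 ha
  refine ⟨a, ha, ?_⟩
  have := hg (insert a s') (by simpa using hchain)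
  rwa [sum_insert has', sum_filter_ne_zero] at this

lemma ChainSumsLE.sub_smul_indicator_maximal [Finite α] {g : α → ℝ} {t c : ℝ}
    (hg : ChainSumsLE g t) (hc0 : 0 ≤ c) (hc : ∀ a, Maximal (g · ≠ 0) a → c ≤ g a)
    {x : α} (hx : g x ≠ 0) :
    ChainSumsLE (g - c • {a | Maximal (g · ≠ 0) a}.indicator 1) (t - c) := by
  set A := {a | Maximal (g · ≠ 0) a}
  intro s hs
  simp only [Pi.sub_apply, Pi.smul_apply, smul_eq_mul, sum_sub_distrib, ← mul_sum]
  by_cases hsA : ∃ a ∈ s, a ∈ A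
  · obtain ⟨a, has, ha⟩ := hsA
    have := single_le_sum (f := A.indicator 1)
      (fun i _ ↦ A.indicator_nonneg (fun _ _ ↦ zero_le_one (α := ℝ)) i) has
    rw [Set.indicator_of_mem ha, Pi.one_apply] at this
    nlinarith [hg s hs]
  · push Not at hsA
    obtain ⟨a, ha, hle⟩ := hg.exists_maximal_add_sum_le hs hsA hx
    rw [sum_eq_zero fun i hi ↦ Set.indicator_of_notMem (hsA i hi) _]
    linarith [hc a ha]

def antichainIndicators (α : Type*) [PartialOrder α] : Set (α → ℝ) :=
  (fun A : Set α ↦ A.indicator 1) '' {A | IsAntichain (· ≤ ·) A}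

lemma mem_smul_convexHull_antichainIndicators [Finite α] {g : α → ℝ} {t : ℝ}
    (hg0 : ∀ i, 0 ≤ g i) (hg : ChainSumsLE g t) :
    g ∈ t • convexHull ℝ (antichainIndicators α) := by
  induction hn : (Function.support g).ncard using Nat.strong_induction_on generalizing g t with
  | _ n ih =>
    obtain hg_zero | ⟨x, hx⟩ := (Function.support g).eq_empty_or_nonempty
    · have h0 : (0 : α → ℝ) ∈ convexHull ℝ (antichainIndicators α) :=
        subset_convexHull ℝ _ ⟨∅, IsAntichain.empty, Set.indicator_empty _⟩
      simpa [Function.support_eq_empty_iff.1 hg_zero] using Set.smul_mem_smul_set (a := t) h0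
    set A := {a | Maximal (g · ≠ 0) a}
    obtain ⟨i₀, hi₀ : Maximal (g · ≠ 0) i₀, hmin⟩ := A.exists_min_image g A.toFinite
      (let ⟨a, _, ha⟩ := Finite.exists_le_maximal (p := (g · ≠ 0)) hx; ⟨a, ha⟩)
    set c := g i₀
    have hc : 0 < c := (hg0 i₀).lt_of_ne' hi₀.prop
    set g' := g - c • A.indicator 1
    have hg'0 (i : α) : 0 ≤ g' i := by
      by_cases hi : i ∈ A
      · simpa [g', hi] using hmin i hi
      · simpa [g', hi] using hg0 i
    have hg' : ChainSumsLE g' (t - c) := hg.sub_smul_indicator_maximal hc.le hmin hx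
    have hsupp : Function.support g' ⊂ Function.support g := by
      refine (Set.ssubset_iff_of_subset fun i hi ↦ ?_).2
        ⟨i₀, hi₀.prop, by simp [g', hi₀, c, A]⟩
      contrapose! hi
      rw [Function.notMem_support] at hi ⊢
      have hiA : i ∉ A := fun h : Maximal (g · ≠ 0) i ↦ h.prop hi
      simp [g', hi, hiA]
    have hg'_mem := ih _ (hn ▸ Set.ncard_lt_ncard hsupp) hg'0 hg' rfl
    have htc : 0 ≤ t - c := by simpa using hg' ∅ (by simp)
    have hA_mem : A.indicator 1 ∈ convexHull ℝ (antichainIndicators α) :=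
      subset_convexHull ℝ _ ⟨A, setOfPred_maximal_antichain _, rfl⟩
    have hdecomp : c • A.indicator 1 + g' = g := add_sub_cancel _ _
    rw [← hdecomp, ← add_sub_cancel c t, (convex_convexHull ℝ _).add_smul hc.le htc]
    exact Set.add_mem_add (Set.smul_mem_smul_set hA_mem) hg'_mem

lemma chainSumsLE_indicator_one {A : Set α} (hA : IsAntichain (· ≤ ·) A) :
    ChainSumsLE (A.indicator 1) 1 := by
  classical
  intro s hs
  have hcard : #(s.filter (· ∈ A)) ≤ 1 := by
    refine card_le_one.2 fun a ha b hb ↦ ?_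
    rw [mem_filter] at ha hb
    exact inter_subsingleton_of_isChain_of_isAntichain hs hA ⟨ha.1, ha.2⟩ ⟨hb.1, hb.2⟩
  simpa [Set.indicator_apply, sum_boole] using hcard

variable [Fintype α]

lemma convex_chainPoly : Convex ℝ (chainPoly α) := by
  rintro y ⟨hy0, hy⟩ z ⟨hz0, hz⟩ a b ha hb hab
  refine ⟨fun i ↦ add_nonneg (mul_nonneg ha (hy0 i)) (mul_nonneg hb (hz0 i)), fun s hs ↦ ?_⟩
  simp only [Pi.add_apply, Pi.smul_apply, smul_eq_mul, sum_add_distrib, ← mul_sum]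
  nlinarith [hy s hs, hz s hs]

lemma indicator_one_mem_chainPoly {A : Set α} (hA : IsAntichain (· ≤ ·) A) :
    A.indicator 1 ∈ chainPoly α :=
  ⟨A.indicator_nonneg fun _ _ ↦ zero_le_one, chainSumsLE_indicator_one hA⟩

lemma chainPoly_subset_pi_Icc : chainPoly α ⊆ univ.pi fun _ ↦ Icc 0 1 :=
  fun g hg i _ ↦ ⟨hg.1 i, by simpa using hg.2 {i} (by simp)⟩

lemma indicator_one_mem_extremePoints_chainPoly {A : Set α} (hA : IsAntichain (· ≤ ·) A) :
    A.indicator 1 ∈ extremePoints ℝ (chainPoly α) := by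
  refine inter_extremePoints_subset_extremePoints_of_subset chainPoly_subset_pi_Icc
    ⟨indicator_one_mem_chainPoly hA, ?_⟩
  rw [extremePoints_pi]
  intro i _
  rw [extremePoints_Icc zero_le_one]
  by_cases hi : i ∈ A <;> simp [hi]

theorem chainPoly_eq_convexHull : chainPoly α = convexHull ℝ (antichainIndicators α) := by
  refine subset_antisymm (fun g hg ↦ ?_) (convexHull_min ?_ convex_chainPoly)
  · simpa using mem_smul_convexHull_antichainIndicators hg.1 hg.2
  · rintro _ ⟨A, hA, rfl⟩
    exact indicator_one_mem_chainPoly hA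

theorem extremePoints_chainPoly : extremePoints ℝ (chainPoly α) = antichainIndicators α := by
  refine subset_antisymm ?_ ?_
  · rw [chainPoly_eq_convexHull]
    exact extremePoints_convexHull_subset
  · rintro _ ⟨A, hA, rfl⟩
    exact indicator_one_mem_extremePoints_chainPoly hA

end

/-- The vertices (extreme points) of the chain polytope are exactly the characteristic
functions of antichains; in particular their number equals the number of antichains. -/
theorem stmt_1 (α : Type*) [PartialOrder α] [Fintype α] :
    Set.extremePoints ℝ (chainPoly α)
        = {x : α → ℝ | ∃ A : Set α, IsAntichain (· ≤ ·) A ∧ x = A.indicator (fun _ => (1 : ℝ))} ∧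
      Nat.card (Set.extremePoints ℝ (chainPoly α))
        = Nat.card {A : Set α // IsAntichain (· ≤ ·) A} := by
  rw [extremePoints_chainPoly]
  refine ⟨?_, Nat.card_image_of_injective (fun A B h ↦ Set.indicator_one_inj ℝ h) _⟩
  ext x
  constructor <;> rintro ⟨A, hA, rfl⟩ <;> exact ⟨A, hA, rfl⟩
end

section
/- For a finite poset Π on d elements and every nonnegative integer k, the number of lattice points in the k-th dilate of the order polytope O(Π) equals the number of order-preserving maps from Π to {1,2,…,k+1}. -/
/-! A lattice point of `k • O(Π)` is a monotone integer vector with entries in `[0, k]`, i.e. an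
order-preserving map from `Π` to the chain `{0, …, k}`, which is order-isomorphic to `Fin (k + 1)`. -/

open scoped Pointwise

/-- The order polytope of a finite poset `α`, as a subset of `α → ℝ`. -/
def orderPoly (α : Type*) [PartialOrder α] [Fintype α] : Set (α → ℝ) :=
  {x | (∀ i, 0 ≤ x i ∧ x i ≤ 1) ∧ ∀ i j : α, i ≤ j → x i ≤ x j}

def OrderIso.monotoneMapsEquiv {α β γ : Type*} [Preorder α] [Preorder β] [Preorder γ]
    {p : γ → Prop} (e : β ≃o {c // p c}) :
    {f : α → γ // (∀ i, p (f i)) ∧ Monotone f} ≃ {g : α → β // Monotone g} where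
  toFun f := ⟨fun i => e.symm ⟨f.1 i, f.2.1 i⟩, fun _ _ hij => e.symm.monotone (f.2.2 hij)⟩
  invFun g := ⟨fun i => e (g.1 i), fun i => (e (g.1 i)).2, fun _ _ hij => e.monotone (g.2 hij)⟩
  left_inv f := by ext; simp
  right_inv g := by ext; simp

section
variable {α : Type*} [PartialOrder α] [Fintype α]

lemma mem_orderPoly_iff {x : α → ℝ} :
    x ∈ orderPoly α ↔ (∀ i, x i ∈ Set.Icc 0 1) ∧ Monotone x :=
  Iff.rfl

lemma mem_smul_orderPoly_iff {c : ℝ} (hc : 0 ≤ c) {x : α → ℝ} :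
    x ∈ c • orderPoly α ↔ (∀ i, x i ∈ Set.Icc 0 c) ∧ Monotone x := by
  rcases hc.eq_or_lt with rfl | hc
  · have hne : (orderPoly α).Nonempty := ⟨0, mem_orderPoly_iff.2 ⟨by simp, monotone_const⟩⟩
    rw [Set.zero_smul_set hne, Set.mem_zero, funext_iff]
    simp only [Set.Icc_self, Set.mem_singleton_iff, Pi.zero_apply]
    exact ⟨fun h => ⟨h, fun _ _ _ => by simp [h]⟩, And.left⟩
  · rw [Set.mem_smul_set_iff_inv_smul_mem₀ hc.ne', mem_orderPoly_iff]
    have hc' : 0 < c⁻¹ := inv_pos.2 hc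
    refine and_congr (forall_congr' fun _ => ?_)
      (forall₂_congr fun _ _ => imp_congr_right fun _ => ?_)
    · simp only [Pi.smul_apply, smul_eq_mul, Set.mem_Icc]
      rw [mul_nonneg_iff_of_pos_left hc', inv_mul_le_one₀ hc]
    · exact mul_le_mul_iff_of_pos_left hc'

lemma intCast_mem_smul_orderPoly_iff (k : ℕ) (x : α → ℤ) :
    (fun i => (x i : ℝ)) ∈ (k : ℝ) • orderPoly α ↔
      (∀ i, x i ∈ Finset.Icc 0 (k : ℤ)) ∧ Monotone x := by
  rw [mem_smul_orderPoly_iff k.cast_nonneg]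
  refine and_congr (forall_congr' fun _ => ?_)
    (forall₂_congr fun _ _ => imp_congr_right fun _ => ?_)
  · simp only [Set.mem_Icc, Finset.mem_Icc]
    norm_cast
  · exact Int.cast_le
end

/-- The number of lattice points in the `k`-th dilate of the order polytope `O(α)`
equals the number of order-preserving maps `α → {1, …, k+1}`. -/
theorem stmt_2 (α : Type*) [PartialOrder α] [Fintype α] (k : ℕ) :
    Nat.card {x : α → ℤ // (fun i => (x i : ℝ)) ∈ (k : ℝ) • orderPoly α}
      = Nat.card {f : α → Fin (k + 1) // Monotone f} := by
  have hcard : (Finset.Icc (0 : ℤ) k).card = k + 1 := by simp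
  calc Nat.card {x : α → ℤ // (fun i => (x i : ℝ)) ∈ (k : ℝ) • orderPoly α}
      = Nat.card {x : α → ℤ // (∀ i, x i ∈ Finset.Icc 0 (k : ℤ)) ∧ Monotone x} :=
        Nat.card_congr (Equiv.subtypeEquivRight (intCast_mem_smul_orderPoly_iff k))
    _ = Nat.card {f : α → Fin (k + 1) // Monotone f} :=
        Nat.card_congr ((Finset.Icc (0 : ℤ) k).orderIsoOfFin hcard).monotoneMapsEquiv
end

section
/- Let Π be a finite poset on d elements, and b ∈ int(cone(O(Π))) ∩ ℤ^{d+1}. Define a weighted directed graph Γ_b on the vertex set Π ∪ {−∞, +∞} with edges (i,j,−1) for each covering pair i ⋖ j in Π̂, and edges (j,i,+1) for each covering pair i ⋖ j with b_j − b_i = 1 (with the conventions b_{−∞}=0 and b_{+∞} = max_k b_k + 1). Then Γ_b contains no directed cycle of negative total weight. -/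
/-!
Extend `b` to `Π̂ = Π ∪ {−∞, +∞}` by `b_{−∞} = 0` and `b_{+∞} = max b + 1`; the extension is
strictly monotone. Every edge `x → y` of `Γ_b` then has weight at least `b_x − b_y`: a
`−1` edge runs along a cover `x ⋖ y`, where `b_x − b_y ≤ −1`, and a `+1` edge is only present
when `b_x − b_y = 1`. Along a closed walk the differences `b_x − b_y` telescope to `0`.
-/

/-- A weighted edge of the digraph `Γ_b`: a down-weight `−1` edge along each covering
pair `x ⋖ y`, and an up-weight `+1` reversed edge along each covering pair `y ⋖ x`
which is sharp for `g`, i.e. `g x − g y = 1`. -/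
def Gedge {V : Type*} [Preorder V] (g : V → ℤ) (x y : V) (w : ℤ) : Prop :=
  (w = -1 ∧ x ⋖ y) ∨ (w = 1 ∧ y ⋖ x ∧ g x - g y = 1)

theorem Fin.sum_castSucc_sub_succ {M : Type*} [AddCommGroup M] :
    ∀ (n : ℕ) (f : Fin (n + 1) → M),
      ∑ t : Fin n, (f t.castSucc - f t.succ) = f 0 - f (Fin.last n)
  | 0, _ => by simp
  | n + 1, f => by
    rw [Fin.sum_univ_succ]
    simp_rw [← Fin.succ_castSucc]
    rw [Fin.sum_castSucc_sub_succ n fun i => f i.succ, Fin.castSucc_zero, Fin.succ_last]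
    abel

theorem Gedge.sub_le {V : Type*} [Preorder V] {g : V → ℤ} (hg : StrictMono g) {x y : V}
    {w : ℤ} (hxy : Gedge g x y w) : g x - g y ≤ w := by
  rcases hxy with ⟨rfl, hcov⟩ | ⟨rfl, -, hsharp⟩
  · linarith [hg hcov.lt]
  · exact hsharp.le

theorem Gedge.sum_weight_nonneg {V : Type*} [Preorder V] {g : V → ℤ} (hg : StrictMono g)
    {n : ℕ} {c : Fin (n + 1) → V} {w : Fin n → ℤ}
    (hwalk : ∀ t : Fin n, Gedge g (c t.castSucc) (c t.succ) (w t))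
    (hclosed : c 0 = c (Fin.last n)) : 0 ≤ ∑ t, w t :=
  calc (0 : ℤ) = ∑ t : Fin n, (g (c t.castSucc) - g (c t.succ)) := by
        rw [Fin.sum_castSucc_sub_succ n fun i => g (c i), hclosed, sub_self]
    _ ≤ ∑ t, w t := Finset.sum_le_sum fun t _ => (hwalk t).sub_le hg

theorem strictMono_recBotCoe_recTopCoe {α : Type*} [Preorder α] {g : α → ℤ}
    (hg : StrictMono g) (hpos : ∀ a, 0 < g a) {M : ℤ} (hM₀ : 0 ≤ M) (hM : ∀ a, g a ≤ M) :
    StrictMono (WithBot.recBotCoe 0 (WithTop.recTopCoe (M + 1) g) : WithBot (WithTop α) → ℤ) := by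
  refine WithBot.strictMono_iff.2 ⟨WithTop.strictMono_iff.2 ⟨hg, fun a => ?_⟩, ?_⟩
  · exact Int.lt_add_one_iff.2 (hM a)
  · refine WithTop.forall.2 ⟨?_, hpos⟩
    exact Int.lt_add_one_iff.2 hM₀

-- `hb` and `hmono` say that `(h, b)` is an interior lattice point of `cone(O(Π))`.
/-- Given an interior lattice point `b` of the cone over the order polytope
(equivalently: `0 < b i < h` and `b` strictly order-preserving), the weighted digraph
`Γ_b` on `Π ∪ {−∞, +∞}` (with `b_{−∞} = 0` and `b_{+∞} = max b + 1`) has no directed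
cycle of negative total weight. -/
theorem stmt_5 (α : Type*) [PartialOrder α] [Fintype α]
    (b : α → ℤ) (h : ℤ)
    (hb : ∀ i, 0 < b i ∧ b i < h) (hmono : ∀ i j : α, i < j → b i < b j) :
    ∀ (n : ℕ) (c : Fin (n + 1) → WithBot (WithTop α)) (w : Fin n → ℤ),
      (∀ t : Fin n,
        Gedge
          (WithBot.recBotCoe 0
            (WithTop.recTopCoe (((Finset.univ.sup fun i => (b i).toNat : ℕ) : ℤ) + 1)
              (fun a => b a)))
          (c t.castSucc) (c t.succ) (w t)) →
      c 0 = c (Fin.last n) → 0 ≤ ∑ t, w t := by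
  intro n c w hwalk hclosed
  have hb_le_max : ∀ a, b a ≤ ((Finset.univ.sup fun i => (b i).toNat : ℕ) : ℤ) := fun a =>
    (Int.self_le_toNat (b a)).trans <|
      Nat.cast_le.2 (Finset.le_sup (f := fun i => (b i).toNat) (Finset.mem_univ a))
  exact Gedge.sum_weight_nonneg
    (strictMono_recBotCoe_recTopCoe hmono (fun a => (hb a).1) (Nat.cast_nonneg _) hb_le_max)
    hwalk hclosed
end

section
/- Let Π be a finite poset with codeg(O(Π)) = r. The following are equivalent: (1) height(j) + depth(i) ≤ rank(Π̂) + 1 for all covering pairs j ⋗ i in Π; (2) for every covering pair j ⋗ i in Π there exists an interior lattice point x ∈ int(r·O(Π)) ∩ ℤ^Π with x_j = x_i + 1. -/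
open scoped Pointwise

/-- `height(i)`: the maximal length of a chain in `Π̂` descending from `i` to `−∞`;
it equals the maximal cardinality of a chain in `Π` with top element `i`. -/
noncomputable def heightP (α : Type*) [PartialOrder α] [Fintype α] (i : α) : ℕ :=
  sSup {n : ℕ | ∃ s : Finset α,
    IsChain (· ≤ ·) (s : Set α) ∧ i ∈ s ∧ (∀ x ∈ s, x ≤ i) ∧ s.card = n}

/-- `depth(i)`: the maximal length of a chain in `Π̂` ascending from `i` to `+∞`. -/
noncomputable def depthP (α : Type*) [PartialOrder α] [Fintype α] (i : α) : ℕ :=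
  sSup {n : ℕ | ∃ s : Finset α,
    IsChain (· ≤ ·) (s : Set α) ∧ i ∈ s ∧ (∀ x ∈ s, i ≤ x) ∧ s.card = n}

/-- The rank of `Π̂ = Π ∪ {−∞, +∞}`. -/
noncomputable def rankHat (α : Type*) [PartialOrder α] [Fintype α] : ℕ :=
  sSup {n : ℕ | ∃ s : Finset α, IsChain (· ≤ ·) (s : Set α) ∧ s.card = n} + 1

open scoped Topology

/-!
The lattice points of `int(c • O(Π))` are the strictly monotone maps `z : Π → ℤ` with
`0 < z < c`. Such a map increases by at least one along every step of a chain, so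
`height j ≤ z j`, `depth i ≤ c - z i` and `rank(Π̂) ≤ c`; as `height` is itself such a map for
`c = rank(Π̂)`, the codegree is `r = rank(Π̂)`, and a point with `x j = x i + 1` gives (1).
Conversely, under (1) raise `height` minimally above `i` so that it takes the value
`height j - 1` at `i`. The result stays below `r`, because a chain from `i` up to `k` has at most
`depth i` elements, and it still takes the value `height j` at `j` because `i ⋖ j`.
-/

lemma exists_update_mem_of_mem_interior {ι : Type*} [DecidableEq ι] {s : Set (ι → ℝ)}
    {x : ι → ℝ} (hx : x ∈ interior s) (k : ι) :
    ∃ ε > 0, Function.update x k (x k - ε) ∈ s ∧ Function.update x k (x k + ε) ∈ s := by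
  have hpath : Continuous fun t : ℝ => Function.update x k (x k + t) :=
    continuous_const.update k (by fun_prop)
  have hnhds : ∀ᶠ t in 𝓝 (0 : ℝ), Function.update x k (x k + t) ∈ s :=
    (hpath.tendsto' 0 x (by simp)).eventually (mem_interior_iff_mem_nhds.1 hx)
  obtain ⟨ε, hε, hball⟩ := Metric.eventually_nhds_iff.1 hnhds
  have hsmall : |ε| / 2 < ε := by rw [abs_of_pos hε]; linarith
  refine ⟨ε / 2, half_pos hε, ?_, hball (by simpa using hsmall)⟩
  simpa [sub_eq_add_neg] using hball (y := -(ε / 2)) (by simpa using hsmall)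

section OrderPolytope

variable {α : Type*} [PartialOrder α] [Fintype α]

lemma mem_smul_orderPoly {c : ℝ} (hc : 0 < c) {x : α → ℝ} :
    x ∈ c • orderPoly α ↔ (∀ k, 0 ≤ x k ∧ x k ≤ c) ∧ Monotone x := by
  simp only [Set.mem_smul_set_iff_inv_smul_mem₀ hc.ne', orderPoly, Set.mem_ofPred_eq,
    Pi.smul_apply, smul_eq_mul, le_inv_mul_iff₀ hc, inv_mul_le_iff₀ hc, mul_zero, mul_one,
    mul_inv_cancel_left₀ hc.ne']
  rfl

lemma isOpen_setOf_strictMono_bounded (c : ℝ) :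
    IsOpen {x : α → ℝ | (∀ k, 0 < x k ∧ x k < c) ∧ StrictMono x} := by
  simp only [StrictMono, Set.ofPred_and, Set.ofPred_forall]
  exact (isOpen_iInter_of_finite fun k => (isOpen_lt continuous_const (continuous_apply k)).inter
    (isOpen_lt (continuous_apply k) continuous_const)).inter
    (isOpen_iInter_of_finite fun k => isOpen_iInter_of_finite fun l =>
      isOpen_iInter_of_finite fun _ => isOpen_lt (continuous_apply k) (continuous_apply l))

lemma interior_smul_orderPoly {c : ℝ} (hc : 0 < c) :
    interior (c • orderPoly α) = {x : α → ℝ | (∀ k, 0 < x k ∧ x k < c) ∧ StrictMono x} := by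
  classical
  refine subset_antisymm (fun x hx => ?_) (interior_maximal (fun x hx => ?_)
    (isOpen_setOf_strictMono_bounded c))
  · have hmem : ∀ k, ∃ ε > 0, 0 ≤ x k - ε ∧ x k + ε ≤ c ∧ ∀ l, k < l → x k + ε ≤ x l := by
      intro k
      obtain ⟨ε, hε, hdown, hup⟩ := exists_update_mem_of_mem_interior hx k
      rw [mem_smul_orderPoly hc] at hdown hup
      refine ⟨ε, hε, by simpa using (hdown.1 k).1, by simpa using (hup.1 k).2, fun l hkl => ?_⟩
      simpa [hkl.ne'] using hup.2 hkl.le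
    refine ⟨fun k => ?_, fun k l hkl => ?_⟩
    · obtain ⟨ε, hε, h0, hc, -⟩ := hmem k
      constructor <;> linarith
    · obtain ⟨ε, hε, -, -, hlt⟩ := hmem k
      linarith [hlt l hkl]
  · exact (mem_smul_orderPoly hc).2 ⟨fun k => ⟨(hx.1 k).1.le, (hx.1 k).2.le⟩, hx.2.monotone⟩

lemma intCast_mem_interior_smul_orderPoly_iff {c : ℕ} (hc : 0 < c) (z : α → ℤ) :
    (fun k => (z k : ℝ)) ∈ interior ((c : ℝ) • orderPoly α) ↔
      (∀ k, 0 < z k ∧ z k < c) ∧ StrictMono z := by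
  rw [interior_smul_orderPoly (by exact_mod_cast hc)]
  simp only [Set.mem_ofPred_eq, StrictMono]
  norm_cast

end OrderPolytope

section Chains

variable {α : Type*} [PartialOrder α]

lemma IsChain.card_le_of_strictMono {s : Finset α} (hs : IsChain (· ≤ ·) (s : Set α))
    {z : α → ℤ} (hz : StrictMono z) {a b : ℤ} (hab : a ≤ b + 1)
    (hs_mem : ∀ k ∈ s, a ≤ z k ∧ z k ≤ b) : (s.card : ℤ) ≤ b - a + 1 := by
  have hinj : Set.InjOn z s := fun k hk l hl hkl =>
    by_contra fun hne => (hs.total hk hl).elim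
      (fun h => (hz (h.lt_of_ne hne)).ne hkl) (fun h => (hz (h.lt_of_ne (Ne.symm hne))).ne' hkl)
  have := Finset.card_le_card_of_injOn z (fun k hk => Finset.mem_Icc.2 (hs_mem k hk)) hinj
  rw [Int.card_Icc] at this
  omega

variable [Finite α]

noncomputable def maxChainCard (S : Set α) : ℕ :=
  sSup (Finset.card '' {s : Finset α | IsChain (· ≤ ·) (s : Set α) ∧ (s : Set α) ⊆ S})

lemma card_le_maxChainCard {S : Set α} {s : Finset α} (hs : IsChain (· ≤ ·) (s : Set α))
    (hsS : (s : Set α) ⊆ S) : s.card ≤ maxChainCard S :=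
  le_csSup (Set.toFinite _).bddAbove ⟨s, ⟨hs, hsS⟩, rfl⟩

lemma exists_isChain_card_eq_maxChainCard (S : Set α) :
    ∃ s : Finset α, IsChain (· ≤ ·) (s : Set α) ∧ (s : Set α) ⊆ S ∧ s.card = maxChainCard S := by
  obtain ⟨s, ⟨hs, hsS⟩, hcard⟩ : maxChainCard S ∈ Finset.card '' _ :=
    Nat.sSup_mem ⟨0, ∅, by simp⟩ (Set.toFinite _).bddAbove
  exact ⟨s, hs, hsS, hcard⟩

lemma one_le_maxChainCard {S : Set α} {a : α} (ha : a ∈ S) : 1 ≤ maxChainCard S :=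
  card_le_maxChainCard (s := {a}) (by simp) (by simpa using ha)

lemma maxChainCard_le_ncard (S : Set α) : maxChainCard S ≤ S.ncard := by
  obtain ⟨s, -, hsS, hs⟩ := exists_isChain_card_eq_maxChainCard S
  rw [← hs, ← Set.ncard_coe_finset]
  exact Set.ncard_le_ncard hsS

lemma maxChainCard_singleton (a : α) : maxChainCard {a} = 1 :=
  le_antisymm ((maxChainCard_le_ncard _).trans_eq (Set.ncard_singleton a))
    (one_le_maxChainCard rfl)

lemma maxChainCard_mono {S T : Set α} (hST : S ⊆ T) : maxChainCard S ≤ maxChainCard T := by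
  obtain ⟨s, hs, hsS, hcard⟩ := exists_isChain_card_eq_maxChainCard S
  exact hcard ▸ card_le_maxChainCard hs (hsS.trans hST)

lemma maxChainCard_lt_of_forall_lt {S T : Set α} {l : α} (hST : S ⊆ T) (hl : l ∈ T)
    (hlt : ∀ a ∈ S, a < l) : maxChainCard S < maxChainCard T := by
  classical
  obtain ⟨s, hs, hsS, hcard⟩ := exists_isChain_card_eq_maxChainCard S
  have hchain : IsChain (· ≤ ·) (insert l s : Set α) :=
    hs.insert fun b hb _ => Or.inr (hlt b (hsS hb)).le
  have hsub : (insert l s : Set α) ⊆ T := Set.insert_subset hl (hsS.trans hST)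
  have hl : l ∉ s := fun h => (hlt l (hsS h)).false
  have := card_le_maxChainCard (s := insert l s) (by simpa using hchain) (by simpa using hsub)
  rw [Finset.card_insert_of_notMem hl] at this
  omega

lemma maxChainCard_le_of_strictMono {S : Set α} {z : α → ℤ} (hz : StrictMono z) {a b : ℤ}
    (hab : a ≤ b + 1) (hS : ∀ k ∈ S, a ≤ z k ∧ z k ≤ b) : (maxChainCard S : ℤ) ≤ b - a + 1 := by
  obtain ⟨s, hs, hsS, hcard⟩ := exists_isChain_card_eq_maxChainCard S
  exact hcard ▸ hs.card_le_of_strictMono hz hab fun k hk => hS k (hsS hk)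

end Chains

section RaiseAt

variable {α : Type*} [PartialOrder α]

open Classical in
/-- For strictly monotone `f`, the least strictly monotone function `≥ f` whose value at `i`
is at least `t`: a chain of `n` elements from `i` up to `k` forces the value `t + n - 1` at `k`. -/
noncomputable def raiseAt (f : α → ℤ) (i : α) (t : ℤ) (k : α) : ℤ :=
  if i ≤ k then max (f k) (t - 1 + maxChainCard (Set.Icc i k)) else f k

variable {f : α → ℤ} {i : α} {t : ℤ}

lemma le_raiseAt (k : α) : f k ≤ raiseAt f i t k := by
  unfold raiseAt
  split_ifs
  exacts [le_max_left _ _, le_rfl]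

lemma raiseAt_le [Finite α] (k : α) :
    raiseAt f i t k ≤ max (f k) (t - 1 + maxChainCard (Set.Ici i)) := by
  unfold raiseAt
  split_ifs
  · exact max_le_max le_rfl (by gcongr; exact maxChainCard_mono Set.Icc_subset_Ici_self)
  · exact le_max_left _ _

lemma raiseAt_strictMono [Finite α] (hf : StrictMono f) : StrictMono (raiseAt f i t) := by
  intro k l hkl
  by_cases hik : i ≤ k
  · have hchain : maxChainCard (Set.Icc i k) < maxChainCard (Set.Icc i l) :=
      maxChainCard_lt_of_forall_lt (Set.Icc_subset_Icc_right hkl.le)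
        ⟨hik.trans hkl.le, le_rfl⟩ fun a ha => ha.2.trans_lt hkl
    simp only [raiseAt, if_pos hik, if_pos (hik.trans hkl.le)]
    exact max_lt_max (hf hkl) (by omega)
  · calc raiseAt f i t k = f k := if_neg hik
      _ < f l := hf hkl
      _ ≤ raiseAt f i t l := le_raiseAt l

lemma raiseAt_self [Finite α] (h : f i ≤ t) : raiseAt f i t i = t := by
  simp [raiseAt, maxChainCard_singleton, h]

lemma raiseAt_of_covBy [Finite α] {j : α} (hij : i ⋖ j) (h : t < f j) :
    raiseAt f i t j = f j := by
  have : maxChainCard (Set.Icc i j) ≤ 2 := by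
    rw [hij.Icc_eq]
    exact (maxChainCard_le_ncard _).trans ((Set.ncard_insert_le _ _).trans (by simp))
  simp only [raiseAt, if_pos hij.1.le]
  exact max_eq_left (by omega)

end RaiseAt

section HeightDepth

variable {α : Type*} [PartialOrder α] [Fintype α]

/-- A longest chain in `S` can be taken through any `i ∈ S` comparable to all of `S`. -/
lemma sSup_card_isChain_mem_eq_maxChainCard {S : Set α} {i : α} (hi : i ∈ S)
    (hcomp : ∀ a ∈ S, a ≤ i ∨ i ≤ a) :
    sSup {n | ∃ s : Finset α,
      IsChain (· ≤ ·) (s : Set α) ∧ i ∈ s ∧ (∀ x ∈ s, x ∈ S) ∧ s.card = n} = maxChainCard S := by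
  classical
  apply le_antisymm
  · refine csSup_le ⟨1, {i}, by simp [hi]⟩ ?_
    rintro _ ⟨s, hs, -, hsS, rfl⟩
    exact card_le_maxChainCard hs hsS
  · obtain ⟨s, hs, hsS, hcard⟩ := exists_isChain_card_eq_maxChainCard S
    have hchain : IsChain (· ≤ ·) (insert i s : Set α) :=
      hs.insert fun b hb _ => (hcomp b (hsS hb)).symm
    refine hcard ▸ (Finset.card_le_card (Finset.subset_insert i s)).trans (le_csSup
      ⟨Fintype.card α, fun _ ⟨t, _, _, _, ht⟩ => ht ▸ t.card_le_univ⟩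
      ⟨insert i s, by simpa using hchain, Finset.mem_insert_self i s, ?_, rfl⟩)
    simpa [Set.insert_subset_iff] using ⟨hi, hsS⟩

lemma heightP_eq_maxChainCard (i : α) : heightP α i = maxChainCard (Set.Iic i) :=
  sSup_card_isChain_mem_eq_maxChainCard (le_refl i) fun _ ha => Or.inl ha

lemma depthP_eq_maxChainCard (i : α) : depthP α i = maxChainCard (Set.Ici i) :=
  sSup_card_isChain_mem_eq_maxChainCard (le_refl i) fun _ ha => Or.inr ha

lemma rankHat_eq_maxChainCard : rankHat α = maxChainCard (Set.univ : Set α) + 1 := by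
  simp [rankHat, maxChainCard, Set.image]

lemma heightP_strictMono : StrictMono (heightP α) := fun k l hkl => by
  simpa only [heightP_eq_maxChainCard] using maxChainCard_lt_of_forall_lt
    (Set.Iic_subset_Iic.2 hkl.le) (le_refl l) fun _ ha => lt_of_le_of_lt ha hkl

lemma heightP_pos (i : α) : 0 < heightP α i :=
  heightP_eq_maxChainCard i ▸ one_le_maxChainCard (le_refl i)

lemma rankHat_pos : 0 < rankHat α :=
  Nat.succ_pos _

lemma heightP_lt_rankHat (i : α) : heightP α i < rankHat α := by
  rw [heightP_eq_maxChainCard, rankHat_eq_maxChainCard, Nat.lt_succ_iff]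
  exact maxChainCard_mono (Set.subset_univ _)

lemma rankHat_le_of_strictMono {z : α → ℤ} {c : ℕ} (hc : 0 < c) (hz : StrictMono z)
    (hz_mem : ∀ k, 0 < z k ∧ z k < c) : rankHat α ≤ c := by
  have := maxChainCard_le_of_strictMono (S := Set.univ) hz (a := 1) (b := c - 1) (by omega)
    fun k _ => ⟨(hz_mem k).1, by linarith [(hz_mem k).2]⟩
  rw [rankHat_eq_maxChainCard]
  omega

lemma heightP_add_depthP_le_of_strictMono {z : α → ℤ} {c : ℕ} (hz : StrictMono z)
    (hz_mem : ∀ k, 0 < z k ∧ z k < c) {i j : α} (hij : z j = z i + 1) :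
    heightP α j + depthP α i ≤ c + 1 := by
  have hheight := maxChainCard_le_of_strictMono (S := Set.Iic j) hz (a := 1) (b := z j)
    (by linarith [(hz_mem j).1]) fun k hk => ⟨(hz_mem k).1, hz.monotone hk⟩
  have hdepth := maxChainCard_le_of_strictMono (S := Set.Ici i) hz (a := z i) (b := c - 1)
    (by linarith [(hz_mem i).2]) fun k hk => ⟨hz.monotone hk, by linarith [(hz_mem k).2]⟩
  rw [heightP_eq_maxChainCard, depthP_eq_maxChainCard]
  omega

lemma exists_strictMono_of_covBy {i j : α} (hij : i ⋖ j)
    (h : heightP α j + depthP α i ≤ rankHat α + 1) :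
    ∃ x : α → ℤ, ((∀ k, 0 < x k ∧ x k < rankHat α) ∧ StrictMono x) ∧ x j = x i + 1 := by
  set f : α → ℤ := fun k => heightP α k
  have hf : StrictMono f := Nat.strictMono_cast.comp heightP_strictMono
  have hfij : f i < f j := hf hij.1
  refine ⟨raiseAt f i (f j - 1), ⟨fun k => ⟨?_, ?_⟩, raiseAt_strictMono hf⟩, ?_⟩
  · exact lt_of_lt_of_le (by simpa [f] using heightP_pos k) (le_raiseAt k)
  · refine (raiseAt_le k).trans_lt (max_lt (by simpa [f] using heightP_lt_rankHat k) ?_)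
    rw [← depthP_eq_maxChainCard]
    simp only [f]
    omega
  · rw [raiseAt_of_covBy hij (by omega), raiseAt_self (by omega)]
    ring

lemma codeg_eq_rankHat {r : ℕ} (hr : IsLeast {c : ℕ | 0 < c ∧
    ∃ z : α → ℤ, (fun i => (z i : ℝ)) ∈ interior ((c : ℝ) • orderPoly α)} r) :
    r = rankHat α := by
  obtain ⟨⟨hr_pos, z, hz⟩, hr_min⟩ := hr
  rw [intCast_mem_interior_smul_orderPoly_iff hr_pos] at hz
  have hheight : (fun k => ((heightP α k : ℤ) : ℝ)) ∈
      interior ((rankHat α : ℝ) • orderPoly α) :=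
    (intCast_mem_interior_smul_orderPoly_iff rankHat_pos _).2
      ⟨fun k => ⟨by exact_mod_cast heightP_pos k, by exact_mod_cast heightP_lt_rankHat k⟩,
        Nat.strictMono_cast.comp heightP_strictMono⟩
  exact le_antisymm (hr_min ⟨rankHat_pos, _, hheight⟩) (rankHat_le_of_strictMono hr_pos hz.2 hz.1)

end HeightDepth

/-- For a finite poset with `codeg(O(Π)) = r`, the following are equivalent:
(1) `height(j) + depth(i) ≤ rank(Π̂) + 1` for all covering pairs `i ⋖ j`;
(2) for every covering pair `i ⋖ j` there is an interior lattice point `x` of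
`r · O(Π)` with `x j = x i + 1`. -/
theorem stmt_6 (α : Type*) [PartialOrder α] [Fintype α] (r : ℕ)
    (hr : IsLeast {c : ℕ | 0 < c ∧
        ∃ z : α → ℤ, (fun i => (z i : ℝ)) ∈ interior ((c : ℝ) • orderPoly α)} r) :
    (∀ i j : α, i ⋖ j → heightP α j + depthP α i ≤ rankHat α + 1)
      ↔ (∀ i j : α, i ⋖ j →
          ∃ x : α → ℤ, (fun i => (x i : ℝ)) ∈ interior ((r : ℝ) • orderPoly α) ∧
            x j = x i + 1) := by
  obtain rfl := codeg_eq_rankHat hr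
  simp only [intCast_mem_interior_smul_orderPoly_iff rankHat_pos]
  refine ⟨fun H i j hij => exists_strictMono_of_covBy hij (H i j hij), fun H i j hij => ?_⟩
  obtain ⟨x, ⟨hx_mem, hx⟩, hxij⟩ := H i j hij
  exact heightP_add_depthP_le_of_strictMono hx hx_mem hxij
end

section
/- The ordinal sum Π₁ ◁ Π₂ of two finite posets is level if and only if both Π₁ and Π₂ are level. -/
/-- `x` is an interior lattice point of the cone over the order polytope of `α`
at height `c`: `0 < x i < c` and `x` strictly order-preserving. -/
def OIntPt (α : Type*) [PartialOrder α] (c : ℕ) (x : α → ℤ) : Prop :=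
  (∀ i, 0 < x i ∧ x i < (c : ℤ)) ∧ ∀ i j : α, i < j → x i < x j

/-- `x` is a lattice point of the cone over the order polytope of `α` at height `c`:
`0 ≤ x i ≤ c` and `x` order-preserving. -/
def OConePt (α : Type*) [PartialOrder α] (c : ℕ) (x : α → ℤ) : Prop :=
  (∀ i, 0 ≤ x i ∧ x i ≤ (c : ℤ)) ∧ ∀ i j : α, i ≤ j → x i ≤ x j

/-- The codegree of the order polytope of `α`: the least positive `c` such that
`c · O(α)` has an interior lattice point. -/
noncomputable def posetCodeg (α : Type*) [PartialOrder α] : ℕ :=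
  sInf {c : ℕ | 0 < c ∧ ∃ x : α → ℤ, OIntPt α c x}

/-- A finite poset is level if every interior lattice point of the cone over its order
polytope decomposes as an interior lattice point at height `codeg` plus a point of the
cone. -/
def PosetLevel (α : Type*) [PartialOrder α] : Prop :=
  ∀ (k : ℕ) (x : α → ℤ), OIntPt α k x →
    ∃ y : α → ℤ, OIntPt α (posetCodeg α) y ∧ OConePt α (k - posetCodeg α) (x - y)


/-!
An interior point `w` of height `c` of the cone over `O(α ⊕ₗ β)` splits at the integer
`m = max_α w`: on `α` it is an interior point of height `m + 1`, and on `β`, shifted down by `m`,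
an interior point of height `c - m`. Conversely, two interior points glue, and so do two cone
points. Hence `codeg (α ⊕ₗ β) = codeg α + codeg β - 1`, and an interior point of that minimal
height splits at `m = codeg α - 1` into interior points of minimal heights. If `α ⊕ₗ β` is
level, an interior point of one summand, glued to a minimal-height interior point of the other,
decomposes in `α ⊕ₗ β`, and the decomposition restricts back. Conversely, an interior point of
`α ⊕ₗ β` is split, both pieces are decomposed, and the pieces of the decompositions are glued.
-/

open Sum

section Restrict

variable {α γ : Type*} [PartialOrder α] [PartialOrder γ] {c m : ℕ} {x : α → ℤ}

theorem OIntPt.comp_strictMono (hx : OIntPt α c x) {f : γ → α} (hf : StrictMono f) :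
    OIntPt γ c (x ∘ f) :=
  ⟨fun i => hx.1 (f i), fun _ _ h => hx.2 _ _ (hf h)⟩

theorem OConePt.comp_monotone (hx : OConePt α c x) {f : γ → α} (hf : Monotone f) :
    OConePt γ c (x ∘ f) :=
  ⟨fun i => hx.1 (f i), fun _ _ h => hx.2 _ _ (hf h)⟩

theorem OIntPt.of_forall_le (hx : OIntPt α c x) (hm : ∀ i, x i ≤ m) : OIntPt α (m + 1) x :=
  ⟨fun i => ⟨(hx.1 i).1, by have := hm i; omega⟩, hx.2⟩

theorem OIntPt.sub_const (hx : OIntPt α c x) (hm : ∀ i, m < x i) :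
    OIntPt α (c - m) (fun i => x i - m) :=
  ⟨fun i => by have := hm i; have := hx.1 i; dsimp only; omega,
    fun i j h => by have := hx.2 i j h; dsimp only; omega⟩

end Restrict

section Codeg

variable {α : Type*} [PartialOrder α]

theorem exists_oIntPt_card [Fintype α] : ∃ x : α → ℤ, OIntPt α (Fintype.card α + 1) x := by
  classical
  refine ⟨fun i => (Finset.univ.filter (· < i)).card + 1, fun i => ⟨by positivity, ?_⟩,
    fun i j hij => ?_⟩
  · have : (Finset.univ.filter (· < i)).card < Fintype.card α :=
      Finset.card_lt_card (Finset.filter_ssubset.mpr ⟨i, Finset.mem_univ _, lt_irrefl i⟩)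
    push_cast
    omega
  · have : (Finset.univ.filter (· < i)).card < (Finset.univ.filter (· < j)).card := by
      refine Finset.card_lt_card (Finset.ssubset_iff_of_subset ?_ |>.mpr ⟨i, ?_, ?_⟩)
      · intro l
        simpa using fun hl => hl.trans hij
      · simpa using hij
      · simp
    push_cast
    omega

theorem posetCodeg_le {c : ℕ} {x : α → ℤ} (hc : 0 < c) (hx : OIntPt α c x) :
    posetCodeg α ≤ c :=
  Nat.sInf_le ⟨hc, x, hx⟩

theorem posetCodeg_spec [Fintype α] : 0 < posetCodeg α ∧ ∃ x, OIntPt α (posetCodeg α) x := by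
  obtain ⟨x, hx⟩ := exists_oIntPt_card (α := α)
  exact Nat.sInf_mem (s := {c | 0 < c ∧ ∃ x : α → ℤ, OIntPt α c x}) ⟨_, Nat.succ_pos _, x, hx⟩

theorem PosetLevel.of_pos
    (h : ∀ (k : ℕ) (x : α → ℤ), 0 < k → OIntPt α k x →
      ∃ y : α → ℤ, OIntPt α (posetCodeg α) y ∧ OConePt α (k - posetCodeg α) (x - y)) :
    PosetLevel α := by
  intro k x hx
  rcases k.eq_zero_or_pos with rfl | hk
  · have hnone (i : α) : False := by have := hx.1 i; omega
    exact ⟨x, ⟨fun i => (hnone i).elim, fun i => (hnone i).elim⟩,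
      ⟨fun i => (hnone i).elim, fun i => (hnone i).elim⟩⟩
  · exact h k x hk hx

end Codeg

def lexGlue {α β : Type*} (s : ℤ) (u : α → ℤ) (v : β → ℤ) : α ⊕ₗ β → ℤ :=
  fun p => Sum.elim u (fun j => s + v j) (ofLex p)

@[simp]
theorem lexGlue_inl {α β : Type*} (s : ℤ) (u : α → ℤ) (v : β → ℤ) (i : α) :
    lexGlue s u v (toLex (inl i)) = u i :=
  rfl

@[simp]
theorem lexGlue_inr {α β : Type*} (s : ℤ) (u : α → ℤ) (v : β → ℤ) (j : β) :
    lexGlue s u v (toLex (inr j)) = s + v j :=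
  rfl

section OrdinalSum

variable {α β : Type*} [PartialOrder α] [PartialOrder β]

theorem OIntPt.lexGlue {a b : ℕ} {u : α → ℤ} {v : β → ℤ} (hu : OIntPt α (a + 1) u)
    (hv : OIntPt β b v) (hb : 0 < b) : OIntPt (α ⊕ₗ β) (a + b) (lexGlue a u v) := by
  refine ⟨fun p => ?_, fun p q hpq => ?_⟩
  · induction p using Lex.rec with | h p => ?_
    rcases p with i | j
    · have := hu.1 i; simp only [lexGlue_inl]; omega
    · have := hv.1 j; simp only [lexGlue_inr]; omega
  · induction p using Lex.rec with | h p => ?_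
    induction q using Lex.rec with | h q => ?_
    rcases p with i | j <;> rcases q with i' | j'
    · exact hu.2 _ _ (Lex.inl_lt_inl_iff.mp hpq)
    · have := (hu.1 i).2
      have := (hv.1 j').1
      simp only [lexGlue_inl, lexGlue_inr]
      omega
    · exact absurd hpq Lex.not_inr_lt_inl
    · have := hv.2 _ _ (Lex.inr_lt_inr_iff.mp hpq); simp only [lexGlue_inr]; omega

theorem OConePt.lexGlue {p q : ℕ} {u : α → ℤ} {v : β → ℤ} (hu : OConePt α p u)
    (hv : OConePt β q v) : OConePt (α ⊕ₗ β) (p + q) (lexGlue p u v) := by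
  refine ⟨fun r => ?_, fun r s hrs => ?_⟩
  · induction r using Lex.rec with | h r => ?_
    rcases r with i | j
    · have := hu.1 i; simp only [lexGlue_inl]; omega
    · have := hv.1 j; simp only [lexGlue_inr]; omega
  · induction r using Lex.rec with | h r => ?_
    induction s using Lex.rec with | h s => ?_
    rcases r with i | j <;> rcases s with i' | j'
    · exact hu.2 _ _ (Lex.inl_le_inl_iff.mp hrs)
    · have := (hu.1 i).2
      have := (hv.1 j').1
      simp only [lexGlue_inl, lexGlue_inr]
      omega
    · exact absurd hrs Lex.not_inr_le_inl
    · have := hv.2 _ _ (Lex.inr_le_inr_iff.mp hrs); simp only [lexGlue_inr]; omega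

theorem OIntPt.exists_split [Fintype α] {c : ℕ} {x : α ⊕ₗ β → ℤ} (hx : OIntPt (α ⊕ₗ β) c x)
    (hc : 0 < c) : ∃ m < c, OIntPt α (m + 1) (fun i => x (toLex (inl i))) ∧
      OIntPt β (c - m) (fun j => x (toLex (inr j)) - m) := by
  set m := Finset.univ.sup fun i => (x (toLex (inl i))).toNat
  refine ⟨m, ?_, (hx.comp_strictMono Lex.inl_strictMono).of_forall_le fun i => ?_,
    (hx.comp_strictMono Lex.inr_strictMono).sub_const fun j => ?_⟩
  · refine (Finset.sup_lt_iff hc).mpr fun i _ => ?_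
    have := hx.1 (toLex (inl i))
    omega
  · have : (x (toLex (inl i))).toNat ≤ m :=
      Finset.le_sup (f := fun i => (x (toLex (inl i))).toNat) (Finset.mem_univ i)
    have := hx.1 (toLex (inl i))
    simp only [Function.comp_apply]
    omega
  · have : m < (x (toLex (inr j))).toNat := by
      refine (Finset.sup_lt_iff (Int.lt_toNat.mpr (hx.1 _).1)).mpr fun i _ => ?_
      have := hx.1 (toLex (inl i))
      have := hx.2 _ _ (Lex.inl_lt_inr i j)
      omega
    simp only [Function.comp_apply]
    omega

theorem posetCodeg_add_posetCodeg_le [Fintype α] {c : ℕ} {x : α ⊕ₗ β → ℤ}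
    (hx : OIntPt (α ⊕ₗ β) c x) (hc : 0 < c) : posetCodeg α + posetCodeg β ≤ c + 1 := by
  obtain ⟨m, hmc, hα, hβ⟩ := hx.exists_split hc
  have := posetCodeg_le m.succ_pos hα
  have := posetCodeg_le (by omega) hβ
  omega

variable [Fintype α] [Fintype β]

theorem posetCodeg_sumLex : posetCodeg (α ⊕ₗ β) + 1 = posetCodeg α + posetCodeg β := by
  obtain ⟨hα, u, hu⟩ := posetCodeg_spec (α := α)
  obtain ⟨hβ, v, hv⟩ := posetCodeg_spec (α := β)
  obtain ⟨hS, w, hw⟩ := posetCodeg_spec (α := α ⊕ₗ β)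
  obtain ⟨a, ha⟩ := Nat.exists_eq_add_one.mpr hα
  rw [ha] at hu
  have := posetCodeg_le (by omega) (hu.lexGlue hv hβ)
  have := posetCodeg_add_posetCodeg_le hw hS
  omega

theorem OIntPt.split_of_posetCodeg {a : ℕ} (ha : posetCodeg α = a + 1) {w : α ⊕ₗ β → ℤ}
    (hw : OIntPt (α ⊕ₗ β) (posetCodeg (α ⊕ₗ β)) w) :
    OIntPt α (posetCodeg α) (fun i => w (toLex (inl i))) ∧
      OIntPt β (posetCodeg β) (fun j => w (toLex (inr j)) - a) := by
  obtain ⟨m, hmc, hα, hβ⟩ := hw.exists_split posetCodeg_spec.1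
  have := posetCodeg_le m.succ_pos hα
  have := posetCodeg_le (by omega) hβ
  have := posetCodeg_sumLex (α := α) (β := β)
  obtain rfl : m = a := by omega
  rw [ha, show posetCodeg β = posetCodeg (α ⊕ₗ β) - m by omega]
  exact ⟨hα, hβ⟩

theorem PosetLevel.of_sumLex_left (h : PosetLevel (α ⊕ₗ β)) : PosetLevel α := by
  obtain ⟨a, ha⟩ := Nat.exists_eq_add_one.mpr (posetCodeg_spec (α := α)).1
  obtain ⟨hβ, v, hv⟩ := posetCodeg_spec (α := β)
  have := posetCodeg_sumLex (α := α) (β := β)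
  refine PosetLevel.of_pos fun k x hk hx => ?_
  obtain ⟨k, rfl⟩ := Nat.exists_eq_add_one.mpr hk
  obtain ⟨y, hy, hxy⟩ := h _ _ (hx.lexGlue hv hβ)
  refine ⟨fun i => y (toLex (inl i)), (hy.split_of_posetCodeg ha).1, ?_⟩
  convert hxy.comp_monotone Lex.inl_mono using 1
  · omega
  · rfl

theorem PosetLevel.of_sumLex_right (h : PosetLevel (α ⊕ₗ β)) : PosetLevel β := by
  obtain ⟨hα, u, hu⟩ := posetCodeg_spec (α := α)
  obtain ⟨a, ha⟩ := Nat.exists_eq_add_one.mpr hα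
  have := posetCodeg_sumLex (α := α) (β := β)
  refine PosetLevel.of_pos fun k x hk hx => ?_
  obtain ⟨y, hy, hxy⟩ := h _ _ ((ha ▸ hu).lexGlue hx hk)
  refine ⟨fun j => y (toLex (inr j)) - a, (hy.split_of_posetCodeg ha).2, ?_⟩
  convert hxy.comp_monotone Lex.inr_mono using 1
  · omega
  · funext j
    simp only [Pi.sub_apply, Function.comp_apply, lexGlue_inr]
    ring

theorem PosetLevel.sumLex (hα : PosetLevel α) (hβ : PosetLevel β) : PosetLevel (α ⊕ₗ β) := by
  obtain ⟨a, ha⟩ := Nat.exists_eq_add_one.mpr (posetCodeg_spec (α := α)).1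
  have := posetCodeg_sumLex (α := α) (β := β)
  refine PosetLevel.of_pos fun k x hk hx => ?_
  obtain ⟨m, hmk, hxα, hxβ⟩ := hx.exists_split hk
  obtain ⟨yα, hyα, hxyα⟩ := hα _ _ hxα
  obtain ⟨yβ, hyβ, hxyβ⟩ := hβ _ _ hxβ
  have := posetCodeg_le m.succ_pos hxα
  have := posetCodeg_le (by omega) hxβ
  refine ⟨lexGlue a yα yβ, ?_, ?_⟩
  · convert (ha ▸ hyα).lexGlue hyβ posetCodeg_spec.1 using 1
    omega
  · convert hxyα.lexGlue hxyβ using 1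
    · omega
    · funext p
      induction p using Lex.rec with | h p => ?_
      rcases p with i | j
      · simp
      · simp only [Pi.sub_apply, lexGlue_inr]
        omega

end OrdinalSum

/-- The ordinal sum `Π₁ ◁ Π₂` of two finite posets is level iff both `Π₁` and `Π₂`
are level. -/
theorem stmt_10 (α β : Type*) [PartialOrder α] [Fintype α] [PartialOrder β] [Fintype β] :
    PosetLevel (α ⊕ₗ β) ↔ PosetLevel α ∧ PosetLevel β :=
  ⟨fun h => ⟨h.of_sumLex_left, h.of_sumLex_right⟩, fun ⟨hα, hβ⟩ => hα.sumLex hβ⟩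
end

section
/- If P and Q are alcoved polytopes in ℝ^d, then every lattice point of the Minkowski sum P + Q is a sum of a lattice point of P and a lattice point of Q; i.e., the addition map (P ∩ ℤ^d) × (Q ∩ ℤ^d) → (P+Q) ∩ ℤ^d is surjective. -/
/-! Write a lattice point `z` of `P + Q` as `a + b` with `a ∈ P`, `b ∈ Q`. Rounding `a` up and `b`
down gives lattice points `⌈a⌉` and `⌊b⌋ = z - ⌈a⌉` summing to `z`. Each defining functional `f`
of an alcoved polytope takes integer values on lattice points and changes by less than `1` under
either rounding, so the integer bound `f ≤ m` survives it. -/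

open scoped Pointwise

/-- The linear functionals `x ↦ x i − x j`, `x ↦ x i`, `x ↦ −x j` (corresponding to
`z_i − z_j` with the convention `z_0 = 0`). -/
def alcFun (ι : Type*) : Set ((ι → ℝ) → ℝ) :=
  {f | (∃ i j : ι, f = fun x => x i - x j) ∨ (∃ i : ι, f = fun x => x i) ∨
       (∃ j : ι, f = fun x => -x j)}

/-- A polytope is alcoved if it is compact and is an intersection of half-spaces of the
form `z_i − z_j ≤ m` with `m ∈ ℤ` (convention `z_0 = 0`). -/
def IsAlcoved {ι : Type*} [Fintype ι] (P : Set (ι → ℝ)) : Prop :=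
  IsCompact P ∧ ∃ (F : Set ((ι → ℝ) → ℝ)) (m : ((ι → ℝ) → ℝ) → ℤ),
    F ⊆ alcFun ι ∧ P = {x | ∀ f ∈ F, f x ≤ (m f : ℝ)}

section alcFun

variable {ι : Type*} {f : (ι → ℝ) → ℝ}

lemma exists_alcFun_intCast_eq (hf : f ∈ alcFun ι) (k : ι → ℤ) :
    ∃ n : ℤ, f (fun i => (k i : ℝ)) = n := by
  rcases hf with ⟨i, j, rfl⟩ | ⟨i, rfl⟩ | ⟨j, rfl⟩
  · exact ⟨k i - k j, by push_cast; rfl⟩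
  · exact ⟨k i, rfl⟩
  · exact ⟨-k j, by push_cast; rfl⟩

lemma alcFun_ceil_lt (hf : f ∈ alcFun ι) (x : ι → ℝ) :
    f (fun i => (⌈x i⌉ : ℝ)) < f x + 1 := by
  rcases hf with ⟨i, j, rfl⟩ | ⟨i, rfl⟩ | ⟨j, rfl⟩
  · linarith [Int.ceil_lt_add_one (x i), Int.le_ceil (x j)]
  · linarith [Int.ceil_lt_add_one (x i)]
  · linarith [Int.le_ceil (x j)]

lemma alcFun_floor_lt (hf : f ∈ alcFun ι) (x : ι → ℝ) :
    f (fun i => (⌊x i⌋ : ℝ)) < f x + 1 := by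
  rcases hf with ⟨i, j, rfl⟩ | ⟨i, rfl⟩ | ⟨j, rfl⟩
  · linarith [Int.floor_le (x i), Int.lt_floor_add_one (x j)]
  · linarith [Int.floor_le (x i)]
  · linarith [Int.lt_floor_add_one (x j)]

end alcFun

namespace IsAlcoved

variable {ι : Type*} [Fintype ι] {P : Set (ι → ℝ)} {x : ι → ℝ}

lemma intCast_mem_of_lt (hP : IsAlcoved P) (hx : x ∈ P) (k : ι → ℤ)
    (hk : ∀ f ∈ alcFun ι, f (fun i => (k i : ℝ)) < f x + 1) :
    (fun i => (k i : ℝ)) ∈ P := by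
  obtain ⟨-, F, m, hF, rfl⟩ := hP
  intro f hf
  obtain ⟨n, hn⟩ := exists_alcFun_intCast_eq (hF hf) k
  have hlt : (n : ℝ) < m f + 1 := hn ▸ (hk f (hF hf)).trans_le (by linarith [hx f hf])
  rw [hn]
  exact_mod_cast Int.lt_add_one_iff.mp (by exact_mod_cast hlt)

lemma ceil_mem (hP : IsAlcoved P) (hx : x ∈ P) : (fun i => (⌈x i⌉ : ℝ)) ∈ P :=
  hP.intCast_mem_of_lt hx _ fun _ hf => alcFun_ceil_lt hf x

lemma floor_mem (hP : IsAlcoved P) (hx : x ∈ P) : (fun i => (⌊x i⌋ : ℝ)) ∈ P :=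
  hP.intCast_mem_of_lt hx _ fun _ hf => alcFun_floor_lt hf x

end IsAlcoved

/-- If `P` and `Q` are alcoved polytopes in `ℝ^d`, then every lattice point of the
Minkowski sum `P + Q` is the sum of a lattice point of `P` and a lattice point of `Q`. -/
theorem stmt_12 {ι : Type*} [Fintype ι] (P Q : Set (ι → ℝ))
    (hP : IsAlcoved P) (hQ : IsAlcoved Q) (z : ι → ℤ)
    (hz : (fun i => (z i : ℝ)) ∈ P + Q) :
    ∃ p q : ι → ℤ, (fun i => (p i : ℝ)) ∈ P ∧ (fun i => (q i : ℝ)) ∈ Q ∧ p + q = z := by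
  obtain ⟨a, ha, b, hb, hab⟩ := hz
  refine ⟨fun i => ⌈a i⌉, fun i => ⌊b i⌋, hP.ceil_mem ha, hQ.floor_mem hb, funext fun i => ?_⟩
  have hb_eq : b i = -a i + z i := by
    linarith [show a i + b i = z i from congrFun hab i]
  simp only [Pi.add_apply, hb_eq, Int.floor_add_intCast, Int.floor_neg]
  ring
end

section
/- Let P ⊂ ℝ^d be an alcoved polytope with r = codeg(P). Then P is level if and only if for every integer k ≥ r one has (kP)^{(1)} = (rP)^{(1)} + (k−r)P (Minkowski sum). -/
open scoped Pointwise

/-- The set of positive integers `c` such that `cP` contains an interior lattice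
point; its least element is the codegree of `P`. -/
def codegSet {ι : Type*} [Fintype ι] (P : Set (ι → ℝ)) : Set ℕ :=
  {c : ℕ | 0 < c ∧ ∃ z : ι → ℤ, (fun i => (z i : ℝ)) ∈ interior ((c : ℝ) • P)}

/-- `P` is level (with codegree `r`): every interior lattice point of the cone over `P`
at height `k ≥ r` decomposes as an interior lattice point at height `r` plus a lattice
point of the cone at height `k − r`. -/
def IsLevel {ι : Type*} [Fintype ι] (P : Set (ι → ℝ)) (r : ℕ) : Prop :=
  ∀ (k : ℕ) (z : ι → ℤ), r ≤ k → (fun i => (z i : ℝ)) ∈ interior ((k : ℝ) • P) →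
    ∃ y w : ι → ℤ, (fun i => (y i : ℝ)) ∈ interior ((r : ℝ) • P) ∧
      (fun i => (w i : ℝ)) ∈ (((k - r : ℕ) : ℝ)) • P ∧ z = y + w

/-- `(mP)^{(1)}`: the convex hull of the interior lattice points of `mP`. -/
noncomputable def intHull {ι : Type*} [Fintype ι] (P : Set (ι → ℝ)) (m : ℕ) :
    Set (ι → ℝ) :=
  convexHull ℝ {x | x ∈ interior ((m : ℝ) • P) ∧ ∃ z : ι → ℤ, x = fun i => (z i : ℝ)}

/-! Write `P = {x | x_a - x_b ≤ β(a, b)}` with indices `a, b ∈ ι ∪ {0}` and `x_0 = 0`.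
Dilating scales `β`, and the interior lattice points of `kP` are the lattice points of
`{x | x_a - x_b ≤ kβ - 1}`. Such polyhedra with integral bounds are lattice polytopes: moving the
coordinates with the largest fractional part `c` up by `1 - c`, or down to the next fractional
value, stays inside and lowers the number of fractional values, and `x` lies between the two
moved points, so induction puts `x` in the convex hull of the lattice points. Hence
`(kP)^{(1)} = {x | x_a - x_b ≤ kβ - 1}`, which contains `(rP)^{(1)} + (k - r)P` by additivity of
the bounds; the reverse inclusion is levelness. Conversely, if `z = a + w` with `a ∈ (rP)^{(1)}`
and `w ∈ (k - r)P`, then `z = ⌈a⌉ + ⌊w⌋` is a splitting as required by levelness, since rounding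
preserves the inequalities. -/

lemma mem_segment_add_smul {V : Type*} [AddCommGroup V] [Module ℝ V] (x v : V) {s t : ℝ}
    (hs : s ≤ 0) (ht : 0 ≤ t) : x ∈ segment ℝ (x + s • v) (x + t • v) := by
  rcases (hs.trans ht).eq_or_lt with hst | hst
  · obtain ⟨rfl, rfl⟩ : s = 0 ∧ t = 0 := ⟨by linarith, by linarith⟩
    simp
  refine ⟨t / (t - s), -s / (t - s), div_nonneg ht (by linarith),
    div_nonneg (by linarith) (by linarith), by field_simp; ring, ?_⟩
  match_scalars <;> field_simp <;> ring

lemma fract_shift_sub_le {u w c c' t : ℝ} {N : ℤ} (h : u - w ≤ N) (hc' : c' < c)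
    (hu : Int.fract u ≠ c → Int.fract u ≤ c') (hw : Int.fract w ≠ c → Int.fract w ≤ c')
    (ht₀ : c' - c ≤ t) (ht₁ : t ≤ 1 - c) :
    (u + t * if Int.fract u = c then 1 else 0) - (w + t * if Int.fract w = c then 1 else 0)
      ≤ N := by
  have hu' := Int.floor_add_fract u
  have hw' := Int.floor_add_fract w
  split_ifs with hcu hcw hcw
  · linarith
  · have hlt : ⌊u⌋ - ⌊w⌋ < N := by
      have : ((⌊u⌋ - ⌊w⌋ : ℤ) : ℝ) < N := by push_cast; linarith [hw hcw]
      exact_mod_cast this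
    have : ((⌊u⌋ - ⌊w⌋ : ℤ) : ℝ) ≤ N - 1 := by exact_mod_cast Int.le_sub_one_of_lt hlt
    push_cast at this
    linarith [Int.fract_nonneg w]
  · have hle : ⌊u⌋ - ⌊w⌋ ≤ N := by
      have : ((⌊u⌋ - ⌊w⌋ : ℤ) : ℝ) < N + 1 := by
        push_cast; linarith [Int.fract_nonneg u, Int.fract_lt_one w]
      exact Int.lt_add_one_iff.mp (by exact_mod_cast this)
    have : ((⌊u⌋ - ⌊w⌋ : ℤ) : ℝ) ≤ N := by exact_mod_cast hle
    push_cast at this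
    linarith [hu hcu]
  · linarith

section

variable {ι : Type*}

/-- `alcCoord none` is the paper's coordinate `z_0 = 0`. -/
def alcCoord (a : Option ι) : (ι → ℝ) →L[ℝ] ℝ :=
  a.elim 0 ContinuousLinearMap.proj

@[simp] lemma alcCoord_none (x : ι → ℝ) : alcCoord none x = 0 := rfl

@[simp] lemma alcCoord_some (i : ι) (x : ι → ℝ) : alcCoord (some i) x = x i := rfl

lemma alcCoord_intCast (a : Option ι) (z : ι → ℤ) :
    alcCoord a (fun i => (z i : ℝ)) = ((a.elim 0 z : ℤ) : ℝ) := by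
  cases a <;> simp

lemma alcCoord_floor (a : Option ι) (x : ι → ℝ) :
    alcCoord a (fun i => (⌊x i⌋ : ℝ)) = ⌊alcCoord a x⌋ := by
  cases a <;> simp

lemma alcCoord_ceil (a : Option ι) (x : ι → ℝ) :
    alcCoord a (fun i => (⌈x i⌉ : ℝ)) = ⌈alcCoord a x⌉ := by
  cases a <;> simp

def alcForm (e : Option ι × Option ι) : (ι → ℝ) →L[ℝ] ℝ := alcCoord e.1 - alcCoord e.2

lemma alcForm_apply (e : Option ι × Option ι) (x : ι → ℝ) :
    alcForm e x = alcCoord e.1 x - alcCoord e.2 x := rfl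

lemma exists_alcForm_of_mem_alcFun {f : (ι → ℝ) → ℝ} (hf : f ∈ alcFun ι) :
    ∃ e : Option ι × Option ι, f = alcForm e := by
  rcases hf with ⟨i, j, rfl⟩ | ⟨i, rfl⟩ | ⟨j, rfl⟩
  · exact ⟨(some i, some j), rfl⟩
  · exact ⟨(some i, none), funext fun x => (sub_zero (x i)).symm⟩
  · exact ⟨(none, some j), funext fun x => (zero_sub (x j)).symm⟩

lemma alcForm_surjective {e : Option ι × Option ι} (he : e.1 ≠ e.2) :
    Function.Surjective (alcForm e) := by
  classical
  suffices ∃ v, alcForm e v = 1 from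
    let ⟨v, hv⟩ := this; fun t => ⟨t • v, by rw [map_smul, hv, smul_eq_mul, mul_one]⟩
  obtain ⟨_ | i, _ | j⟩ := e
  · exact absurd rfl he
  · exact ⟨-Pi.single j 1, by simp [alcForm_apply]⟩
  · exact ⟨Pi.single i 1, by simp [alcForm_apply]⟩
  · have hij : j ≠ i := fun h => he (by rw [h])
    exact ⟨Pi.single i 1, by simp [alcForm_apply, hij]⟩

def alcPoly (E : Set (Option ι × Option ι)) (β : Option ι × Option ι → ℤ) : Set (ι → ℝ) :=
  {x | ∀ e ∈ E, alcForm e x ≤ β e}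

def integerPoints (ι : Type*) : Set (ι → ℝ) := {x | ∃ z : ι → ℤ, x = fun i => (z i : ℝ)}

noncomputable def fractIndicator (x : ι → ℝ) (c : ℝ) : ι → ℝ :=
  fun i => if Int.fract (x i) = c then 1 else 0

lemma alcCoord_fractIndicator {c : ℝ} (hc : c ≠ 0) (a : Option ι) (x : ι → ℝ) :
    alcCoord a (fractIndicator x c) = if Int.fract (alcCoord a x) = c then 1 else 0 := by
  cases a
  · simp [hc.symm]
  · rfl

variable (E : Set (Option ι × Option ι))

lemma alcPoly_eq_biInter (β : Option ι × Option ι → ℤ) :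
    alcPoly E β = ⋂ e ∈ E, alcForm e ⁻¹' Set.Iic (β e : ℝ) := by
  ext x
  simp [alcPoly]

lemma convex_alcPoly (β : Option ι × Option ι → ℤ) : Convex ℝ (alcPoly E β) := by
  rw [alcPoly_eq_biInter]
  exact convex_iInter₂ fun e _ => (convex_Iic _).linear_preimage (alcForm e).toLinearMap

lemma smul_alcPoly_subset (β : Option ι × Option ι → ℤ) (c : ℕ) :
    (c : ℝ) • alcPoly E β ⊆ alcPoly E (c * β) := by
  rintro _ ⟨x, hx, rfl⟩ e he
  rw [map_smul, smul_eq_mul, Pi.mul_apply, Pi.natCast_apply]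
  push_cast
  exact mul_le_mul_of_nonneg_left (hx e he) c.cast_nonneg

lemma smul_alcPoly (β : Option ι × Option ι → ℤ) {c : ℕ} (hc : 0 < c) :
    (c : ℝ) • alcPoly E β = alcPoly E (c * β) := by
  refine (smul_alcPoly_subset E β c).antisymm fun x hx => ?_
  have hc' : (0 : ℝ) < c := Nat.cast_pos.2 hc
  refine (Set.mem_smul_set_iff_inv_smul_mem₀ hc'.ne' _ _).2 fun e he => ?_
  rw [map_smul, smul_eq_mul, inv_mul_le_iff₀ hc']
  exact_mod_cast hx e he

lemma alcPoly_add_subset (β γ : Option ι × Option ι → ℤ) :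
    alcPoly E β + alcPoly E γ ⊆ alcPoly E (β + γ) := by
  rintro _ ⟨x, hx, y, hy, rfl⟩ e he
  rw [map_add, Pi.add_apply, Int.cast_add]
  exact add_le_add (hx e he) (hy e he)

variable {E} {β : Option ι × Option ι → ℤ} {x : ι → ℝ}

lemma floor_mem_alcPoly (hx : x ∈ alcPoly E β) : (fun i => (⌊x i⌋ : ℝ)) ∈ alcPoly E β :=
  fun e he => by
  have h := hx e he
  rw [alcForm_apply] at h
  rw [alcForm_apply, alcCoord_floor, alcCoord_floor, ← Int.cast_sub, Int.cast_le,
    sub_le_iff_le_add', ← Int.floor_add_intCast]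
  exact Int.floor_mono (by linarith)

lemma ceil_mem_alcPoly (hx : x ∈ alcPoly E β) : (fun i => (⌈x i⌉ : ℝ)) ∈ alcPoly E β :=
  fun e he => by
  have h := hx e he
  rw [alcForm_apply] at h
  rw [alcForm_apply, alcCoord_ceil, alcCoord_ceil, ← Int.cast_sub, Int.cast_le,
    sub_le_iff_le_add', ← Int.ceil_add_intCast]
  exact Int.ceil_mono (by linarith)

lemma add_smul_fractIndicator_mem_alcPoly (hx : x ∈ alcPoly E β) {c c' t : ℝ}
    (hc'₀ : 0 ≤ c') (hc' : c' < c) (hgap : ∀ i, Int.fract (x i) ≠ c → Int.fract (x i) ≤ c')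
    (ht₀ : c' - c ≤ t) (ht₁ : t ≤ 1 - c) :
    x + t • fractIndicator x c ∈ alcPoly E β := fun e he => by
  have hgap' (a : Option ι) : Int.fract (alcCoord a x) ≠ c → Int.fract (alcCoord a x) ≤ c' := by
    cases a
    · intro
      simpa using hc'₀
    · exact hgap _
  have := fract_shift_sub_le (hx e he) hc' (hgap' e.1) (hgap' e.2) ht₀ ht₁
  rwa [alcForm_apply, map_add, map_add, map_smul, map_smul, smul_eq_mul, smul_eq_mul,
    alcCoord_fractIndicator (hc'₀.trans_lt hc').ne',
    alcCoord_fractIndicator (hc'₀.trans_lt hc').ne']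

variable [Fintype ι]

lemma interior_alcPoly (hE : ∀ e ∈ E, e.1 ≠ e.2) (β : Option ι × Option ι → ℤ) :
    interior (alcPoly E β) = {x | ∀ e ∈ E, alcForm e x < β e} := by
  rw [alcPoly_eq_biInter, E.toFinite.interior_biInter]
  ext x
  simp only [Set.mem_iInter, Set.mem_ofPred_eq]
  refine forall₂_congr fun e he => ?_
  rw [(alcForm e).interior_preimage (alcForm_surjective (hE e he)), interior_Iic]
  rfl

lemma interior_alcPoly_inter_integerPoints (hE : ∀ e ∈ E, e.1 ≠ e.2)
    (β : Option ι × Option ι → ℤ) :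
    interior (alcPoly E β) ∩ integerPoints ι = alcPoly E (β - 1) ∩ integerPoints ι := by
  ext x
  refine and_congr_left fun ⟨z, hz⟩ => ?_
  subst hz
  rw [interior_alcPoly hE]
  refine forall₂_congr fun e _ => ?_
  rw [alcForm_apply, alcCoord_intCast, alcCoord_intCast, Pi.sub_apply, Pi.one_apply]
  push_cast
  norm_cast
  exact Order.le_sub_one_iff.symm

noncomputable def fractValues (x : ι → ℝ) : Finset ℝ :=
  insert 0 (Finset.univ.image fun i => Int.fract (x i))

lemma fract_mem_fractValues (x : ι → ℝ) (i : ι) : Int.fract (x i) ∈ fractValues x :=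
  Finset.mem_insert_of_mem (Finset.mem_image_of_mem _ (Finset.mem_univ i))

lemma zero_mem_fractValues (x : ι → ℝ) : 0 ∈ fractValues x := Finset.mem_insert_self _ _

lemma lt_one_of_mem_fractValues {x : ι → ℝ} {y : ℝ} (hy : y ∈ fractValues x) : y < 1 := by
  simp only [fractValues, Finset.mem_insert, Finset.mem_image, Finset.mem_univ, true_and] at hy
  rcases hy with rfl | ⟨i, rfl⟩
  exacts [one_pos, Int.fract_lt_one _]

lemma fractValues_add_smul_fractIndicator_subset (x : ι → ℝ) {c : ℝ} (hc : c ≠ 0) (t : ℝ) :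
    fractValues (x + t • fractIndicator x c) ⊆
      insert (Int.fract (c + t)) ((fractValues x).erase c) := by
  intro y hy
  simp only [fractValues, Finset.mem_insert, Finset.mem_image, Finset.mem_univ, true_and] at hy
  rcases hy with rfl | ⟨i, rfl⟩
  · exact Finset.mem_insert_of_mem (Finset.mem_erase.2 ⟨hc.symm, zero_mem_fractValues x⟩)
  simp only [Pi.add_apply, Pi.smul_apply, fractIndicator, smul_eq_mul]
  split_ifs with hi
  · refine Finset.mem_insert.2 (Or.inl ?_)
    rw [mul_one, ← Int.floor_add_fract (x i), hi, add_assoc, Int.fract_intCast_add]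
  · rw [mul_zero, add_zero]
    exact Finset.mem_insert_of_mem (Finset.mem_erase.2 ⟨hi, fract_mem_fractValues x i⟩)

variable (E) in
lemma alcPoly_subset_convexHull (β : Option ι × Option ι → ℤ) :
    alcPoly E β ⊆ convexHull ℝ (alcPoly E β ∩ integerPoints ι) := by
  intro x hx
  induction hn : (fractValues x).card using Nat.strong_induction_on generalizing x with
  | _ n ih =>
  set V := fractValues x
  set c := V.max' ⟨0, zero_mem_fractValues x⟩
  have hle_c (i : ι) : Int.fract (x i) ≤ c := V.le_max' _ (fract_mem_fractValues x i)
  rcases (V.le_max' 0 (zero_mem_fractValues x)).eq_or_lt with hc | hc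
  · refine subset_convexHull ℝ _ ⟨hx, fun i => ⌊x i⌋, funext fun i => ?_⟩
    have : Int.fract (x i) = 0 := le_antisymm (hc ▸ hle_c i) (Int.fract_nonneg _)
    rwa [← Int.self_sub_floor, sub_eq_zero] at this
  have h0 : 0 ∈ V.erase c := Finset.mem_erase.2 ⟨hc.ne, zero_mem_fractValues x⟩
  set c' := (V.erase c).max' ⟨0, h0⟩
  have hc'V : c' ∈ V.erase c := Finset.max'_mem _ _
  have hc' : c' < c :=
    (V.le_max' _ (Finset.mem_of_mem_erase hc'V)).lt_of_ne (Finset.ne_of_mem_erase hc'V)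
  have hc'₀ : 0 ≤ c' := (V.erase c).le_max' 0 h0
  have hgap (i : ι) (hi : Int.fract (x i) ≠ c) : Int.fract (x i) ≤ c' :=
    (V.erase c).le_max' _ (Finset.mem_erase.2 ⟨hi, fract_mem_fractValues x i⟩)
  have hc₁ : c < 1 := lt_one_of_mem_fractValues (V.max'_mem _)
  have shift (t : ℝ) (ht₀ : c' - c ≤ t) (ht₁ : t ≤ 1 - c)
      (hfract : Int.fract (c + t) ∈ V.erase c) :
      x + t • fractIndicator x c ∈ convexHull ℝ (alcPoly E β ∩ integerPoints ι) := by
    refine ih _ ?_ (add_smul_fractIndicator_mem_alcPoly hx hc'₀ hc' hgap ht₀ ht₁) rfl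
    calc _ ≤ (insert (Int.fract (c + t)) (V.erase c)).card :=
          Finset.card_le_card (fractValues_add_smul_fractIndicator_subset x hc.ne' t)
      _ = (V.erase c).card := by rw [Finset.insert_eq_of_mem hfract]
      _ < n := hn ▸ Finset.card_erase_lt_of_mem (V.max'_mem _)
  have hdown := shift (c' - c) le_rfl (by linarith) (by
    rwa [add_sub_cancel, Int.fract_eq_self.2 ⟨hc'₀, hc'.trans hc₁⟩])
  have hup := shift (1 - c) (by linarith) le_rfl (by
    rw [add_sub_cancel, Int.fract_one]
    exact h0)
  exact (convex_convexHull ℝ _).segment_subset hdown hup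
    (mem_segment_add_smul x _ (by linarith) (by linarith))

variable (E) in
lemma convexHull_alcPoly_inter_integerPoints (β : Option ι × Option ι → ℤ) :
    convexHull ℝ (alcPoly E β ∩ integerPoints ι) = alcPoly E β :=
  (convexHull_min Set.inter_subset_left (convex_alcPoly E β)).antisymm
    (alcPoly_subset_convexHull E β)

lemma intHull_alcPoly (hE : ∀ e ∈ E, e.1 ≠ e.2) (β : Option ι × Option ι → ℤ) {k : ℕ}
    (hk : 0 < k) : intHull (alcPoly E β) k = alcPoly E (k * β - 1) := by
  change convexHull ℝ (interior _ ∩ integerPoints ι) = _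
  rw [smul_alcPoly E β hk, interior_alcPoly_inter_integerPoints hE,
    convexHull_alcPoly_inter_integerPoints]

lemma IsAlcoved.exists_eq_alcPoly {P : Set (ι → ℝ)} (hP : IsAlcoved P) (hne : P.Nonempty) :
    ∃ (E : Set (Option ι × Option ι)) (β : Option ι × Option ι → ℤ),
      (∀ e ∈ E, e.1 ≠ e.2) ∧ P = alcPoly E β := by
  obtain ⟨-, F, m, hF, rfl⟩ := hP
  refine ⟨{e | e.1 ≠ e.2 ∧ ⇑(alcForm e) ∈ F}, fun e => m (alcForm e), fun e he => he.1, ?_⟩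
  ext x
  refine ⟨fun hx e he => hx _ he.2, fun hx f hf => ?_⟩
  obtain ⟨e, rfl⟩ := exists_alcForm_of_mem_alcFun (hF hf)
  by_cases he : e.1 = e.2
  · -- a vanishing form, whose bound is nonnegative because `P` is nonempty
    obtain ⟨p, hp⟩ := hne
    have h0 (y : ι → ℝ) : alcForm e y = 0 := by rw [alcForm_apply, he, sub_self]
    simpa [h0] using hp _ hf
  · exact hx e ⟨he, hf⟩

lemma IsLevel.intHull_subset {P : Set (ι → ℝ)} {r k : ℕ} (h : IsLevel P r) (hP : Convex ℝ P)
    (hk : r ≤ k) : intHull P k ⊆ intHull P r + ((k - r : ℕ) : ℝ) • P := by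
  refine convexHull_min ?_ ((convex_convexHull ℝ _).add (hP.smul _))
  rintro _ ⟨hz, z, rfl⟩
  obtain ⟨y, w, hy, hw, rfl⟩ := h k z hk hz
  have hcast : (fun i => ((y + w) i : ℝ)) = (fun i => (y i : ℝ)) + fun i => (w i : ℝ) := by
    ext i
    simp
  rw [hcast]
  exact Set.add_mem_add (subset_convexHull ℝ _ ⟨hy, y, rfl⟩) hw

lemma intHull_add_smul_alcPoly_subset (hE : ∀ e ∈ E, e.1 ≠ e.2) (β : Option ι × Option ι → ℤ)
    {r k : ℕ} (hr : 0 < r) (hk : r ≤ k) :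
    intHull (alcPoly E β) r + ((k - r : ℕ) : ℝ) • alcPoly E β ⊆ intHull (alcPoly E β) k := by
  have hβ : (r * β - 1 + (k - r : ℕ) * β : Option ι × Option ι → ℤ) = k * β - 1 := by
    ext e
    simp [Nat.cast_sub hk]
    ring
  rw [intHull_alcPoly hE β hr, intHull_alcPoly hE β (hr.trans_le hk), ← hβ]
  exact (Set.add_subset_add_left (smul_alcPoly_subset E β _)).trans (alcPoly_add_subset E _ _)

lemma isLevel_of_intHull_eq (hE : ∀ e ∈ E, e.1 ≠ e.2) (β : Option ι × Option ι → ℤ) {r : ℕ}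
    (hr : 0 < r) (h : ∀ k : ℕ, r ≤ k →
      intHull (alcPoly E β) k = intHull (alcPoly E β) r + ((k - r : ℕ) : ℝ) • alcPoly E β) :
    IsLevel (alcPoly E β) r := by
  intro k z hk hz
  rcases hk.eq_or_lt with rfl | hk
  · refine ⟨z, 0, hz, ?_, (add_zero z).symm⟩
    rw [Nat.sub_self, Nat.cast_zero,
      Set.zero_smul_set (Set.smul_set_nonempty.1 ⟨_, interior_subset hz⟩)]
    simp [Pi.zero_def]
  have hzk : (fun i => (z i : ℝ)) ∈ intHull (alcPoly E β) k :=
    subset_convexHull ℝ _ ⟨hz, z, rfl⟩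
  rw [h k hk.le, intHull_alcPoly hE β hr] at hzk
  obtain ⟨a, ha, w, hw, hzaw⟩ := hzk
  refine ⟨fun i => ⌈a i⌉, fun i => ⌊w i⌋, ?_, ?_, ?_⟩
  · have hmem : (fun i => (⌈a i⌉ : ℝ)) ∈ alcPoly E (r * β - 1) ∩ integerPoints ι :=
      ⟨ceil_mem_alcPoly ha, _, rfl⟩
    rw [← interior_alcPoly_inter_integerPoints hE, ← smul_alcPoly E β hr] at hmem
    exact hmem.1
  · rw [smul_alcPoly E β (Nat.sub_pos_of_lt hk)]
    exact floor_mem_alcPoly (smul_alcPoly_subset E β _ hw)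
  · -- `w = z - a` with `z` integral, so `⌊w⌋ = z - ⌈a⌉`
    ext i
    have hw : w i = z i - a i := eq_sub_of_add_eq' (congrFun hzaw i)
    rw [Pi.add_apply, hw, sub_eq_add_neg, Int.floor_intCast_add, Int.floor_neg]
    ring

end

/-- An alcoved polytope `P` with codegree `r` is level iff for every `k ≥ r` one has
`(kP)^{(1)} = (rP)^{(1)} + (k − r)P`. -/
theorem stmt_13 {ι : Type*} [Fintype ι] (P : Set (ι → ℝ)) (hP : IsAlcoved P)
    (r : ℕ) (hr : IsLeast (codegSet P) r) :
    IsLevel P r ↔ ∀ k : ℕ, r ≤ k →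
      intHull P k = intHull P r + (((k - r : ℕ) : ℝ)) • P := by
  obtain ⟨⟨hr₀, z₀, hz₀⟩, -⟩ := hr
  obtain ⟨E, β, hE, rfl⟩ :=
    hP.exists_eq_alcPoly (Set.smul_set_nonempty.1 ⟨_, interior_subset hz₀⟩)
  exact ⟨fun h k hk => (h.intHull_subset (convex_alcPoly E β) hk).antisymm
    (intHull_add_smul_alcPoly_subset hE β hr₀ hk), isLevel_of_intHull_eq hE β hr₀⟩
end

section
/- Let P ⊂ ℝ^d be a lattice polytope and r' ≥ codeg(P) an integer. If there exists an integer k > r' such that (kP)^{(1)} = (r'P)^{(1)} + (k−r')P, then for every integer k' with r' ≤ k' < k one has (k'P)^{(1)} = (r'P)^{(1)} + (k'−r')P. -/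
open scoped Pointwise

/-!
The inclusion `⊇` holds for every lattice polytope: an interior lattice point of `aP` plus `b`
times a lattice point of `P` is an interior lattice point of `(a + b)P`. For `⊆`, adding `(k - k')P` to
`(k'P)^{(1)}` lands in `(kP)^{(1)} = (r'P)^{(1)} + (k' - r')P + (k - k')P`, and Rådström's
cancellation law removes the bounded summand `(k - k')P`, since `(r'P)^{(1)} + (k' - r')P` is
closed and convex.
-/

section Cancellation

variable {E : Type*} {A B C : Set E}

theorem Convex.natCast_smul_add_mem_smul_add [AddCommGroup E] [Module ℝ E] (hB : Convex ℝ B)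
    (h : A + C ⊆ B + C) {a c : E} (ha : a ∈ A) (hc : c ∈ C) (n : ℕ) :
    (n : ℝ) • a + c ∈ (n : ℝ) • B + C := by
  induction n with
  | zero =>
    obtain ⟨b, hb, -⟩ := h (Set.add_mem_add ha hc)
    simpa [Set.zero_smul_set ⟨b, hb⟩] using hc
  | succ n ih =>
    obtain ⟨_, ⟨b, hb, rfl⟩, c', hc', hbc⟩ := ih
    obtain ⟨b', hb', c'', hc'', hbc'⟩ := h (Set.add_mem_add ha hc')
    beta_reduce at hbc hbc'
    have hsum : (n : ℝ) • b + b' ∈ ((n + 1 : ℕ) : ℝ) • B := by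
      rw [Nat.cast_succ, hB.add_smul n.cast_nonneg zero_le_one, one_smul]
      exact Set.add_mem_add (Set.smul_mem_smul_set hb) hb'
    refine ⟨_, hsum, c'', hc'', ?_⟩
    calc (n : ℝ) • b + b' + c'' = (n : ℝ) • b + (a + c') := by rw [add_assoc, hbc']
      _ = (n : ℝ) • a + c + a := by rw [← hbc]; abel
      _ = ((n + 1 : ℕ) : ℝ) • a + c := by rw [Nat.cast_succ, add_smul, one_smul]; abel

/-- Rådström's cancellation law. Iterating `A + C ⊆ B + C` writes `n • a + c₀ = n • b + c`
with `b ∈ B` by convexity, so `a` lies within `diam C / n` of `B`. -/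
theorem Convex.subset_of_add_subset_add [NormedAddCommGroup E] [NormedSpace ℝ E]
    (hB : Convex ℝ B) (hBc : IsClosed B) (hC : Bornology.IsBounded C) (hCne : C.Nonempty)
    (h : A + C ⊆ B + C) : A ⊆ B := by
  intro a ha
  obtain ⟨c₀, hc₀⟩ := hCne
  rw [← hBc.closure_eq, Metric.mem_closure_iff]
  intro ε hε
  obtain ⟨n, hn⟩ := exists_nat_gt (Metric.diam C / ε)
  have hn₀ : (0 : ℝ) < n := (div_nonneg Metric.diam_nonneg hε.le).trans_lt hn
  obtain ⟨_, ⟨b, hb, rfl⟩, c, hc, hbc⟩ := hB.natCast_smul_add_mem_smul_add h ha hc₀ n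
  beta_reduce at hbc
  refine ⟨b, hb, ?_⟩
  have hab : a - b = (n : ℝ)⁻¹ • (c - c₀) := by
    rw [eq_inv_smul_iff₀ hn₀.ne', smul_sub, sub_eq_sub_iff_add_eq_add, ← hbc, add_comm]
  calc dist a b = (n : ℝ)⁻¹ * dist c c₀ := by
        rw [dist_eq_norm, hab, norm_smul, norm_inv, Real.norm_natCast, dist_eq_norm]
    _ ≤ (n : ℝ)⁻¹ * Metric.diam C := by gcongr; exact Metric.dist_le_diam_of_mem hC hc hc₀
    _ < ε := by rw [inv_mul_lt_iff₀ hn₀]; rwa [div_lt_iff₀ hε] at hn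

end Cancellation

section LatticePolytope

variable {ι : Type*} {P : Set (ι → ℝ)}

def IsLatticePolytope (P : Set (ι → ℝ)) : Prop :=
  ∃ V : Finset (ι → ℤ),
    P = convexHull ℝ ((fun (z : ι → ℤ) => fun i => (z i : ℝ)) '' (V : Set (ι → ℤ)))

theorem IsLatticePolytope.convex (hP : IsLatticePolytope P) : Convex ℝ P := by
  obtain ⟨V, rfl⟩ := hP
  exact convex_convexHull ℝ _

theorem IsLatticePolytope.isCompact (hP : IsLatticePolytope P) : IsCompact P := by
  obtain ⟨V, rfl⟩ := hP
  exact (V.finite_toSet.image _).isCompact_convexHull (𝕜 := ℝ)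

variable [Fintype ι]

theorem finite_latticePoints_of_isCompact {K : Set (ι → ℝ)} (hK : IsCompact K) :
    {x | x ∈ K ∧ ∃ z : ι → ℤ, x = fun i => (z i : ℝ)}.Finite := by
  have hcast : Topology.IsClosedEmbedding (fun (z : ι → ℤ) => fun i => (z i : ℝ)) :=
    .piMap fun _ => Int.isClosedEmbedding_coe_real
  refine ((hcast.isCompact_preimage hK).finite_of_discrete.image (fun z i => (z i : ℝ))).subset ?_
  rintro _ ⟨hz, z, rfl⟩
  exact ⟨z, hz, rfl⟩

theorem isCompact_intHull (hP : IsCompact P) (m : ℕ) : IsCompact (intHull P m) :=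
  Set.Finite.isCompact_convexHull (𝕜 := ℝ) <|
    (finite_latticePoints_of_isCompact (hP.smul (m : ℝ))).subset
      fun _ hx => ⟨interior_subset hx.1, hx.2⟩

theorem IsLatticePolytope.intHull_add_smul_subset (hP : IsLatticePolytope P) (a b : ℕ) :
    intHull P a + (b : ℝ) • P ⊆ intHull P (a + b) := by
  have hconv := hP.convex
  obtain ⟨V, rfl⟩ := hP
  set L := (fun (z : ι → ℤ) => fun i => (z i : ℝ)) '' (V : Set (ι → ℤ))
  have hbP : (b : ℝ) • convexHull ℝ L = convexHull ℝ ((b : ℝ) • L) := (convexHull_smul _ _).symm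
  rw [intHull, hbP, ← convexHull_add]
  refine convexHull_mono ?_
  rintro _ ⟨x, ⟨hx, z, rfl⟩, _, ⟨_, ⟨w, hw, rfl⟩, rfl⟩, rfl⟩
  refine ⟨?_, z + (b : ℤ) • w, ?_⟩
  · rw [Nat.cast_add, hconv.add_smul (Nat.cast_nonneg a) (Nat.cast_nonneg b)]
    exact subset_interior_add_left
      (Set.add_mem_add hx (Set.smul_mem_smul_set (subset_convexHull ℝ L ⟨w, hw, rfl⟩)))
  · ext i
    simp

end LatticePolytope

theorem stmt_14_general {ι : Type*} [Fintype ι] (P : Set (ι → ℝ))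
    (hP : ∃ V : Finset (ι → ℤ), P = convexHull ℝ ((fun (z : ι → ℤ) => fun i => (z i : ℝ)) '' (V : Set (ι → ℤ))))
    (r' k : ℕ)
    (h : intHull P k = intHull P r' + (((k - r' : ℕ) : ℝ)) • P) :
    ∀ k' : ℕ, r' ≤ k' → k' < k →
      intHull P k' = intHull P r' + (((k' - r' : ℕ) : ℝ)) • P := by
  intro k' hrk' hk'k
  have hP : IsLatticePolytope P := hP
  have hsup := hP.intHull_add_smul_subset r' (k' - r')
  rw [Nat.add_sub_cancel' hrk'] at hsup
  refine Set.Subset.antisymm ?_ hsup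
  rcases P.eq_empty_or_nonempty with rfl | hPne
  · simp [intHull]
  refine Convex.subset_of_add_subset_add ((convex_convexHull ℝ _).add (hP.convex.smul _))
    ((isCompact_intHull hP.isCompact r').add (hP.isCompact.smul _)).isClosed
    (hP.isCompact.smul _).isBounded (hPne.smul_set (a := ((k - k' : ℕ) : ℝ))) ?_
  calc intHull P k' + ((k - k' : ℕ) : ℝ) • P ⊆ intHull P (k' + (k - k')) :=
        hP.intHull_add_smul_subset k' (k - k')
    _ = intHull P r' + ((k - r' : ℕ) : ℝ) • P := by rw [Nat.add_sub_cancel' hk'k.le, h]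
    _ = intHull P r' + ((k' - r' : ℕ) : ℝ) • P + ((k - k' : ℕ) : ℝ) • P := by
      rw [add_assoc, ← hP.convex.add_smul (Nat.cast_nonneg _) (Nat.cast_nonneg _), ← Nat.cast_add,
        add_comm (k' - r'), Nat.sub_add_sub_cancel hk'k.le hrk']

/-- Let `P` be a lattice polytope and `r' ≥ codeg(P)`. If for some `k > r'` one has
`(kP)^{(1)} = (r'P)^{(1)} + (k − r')P`, then for every `r' ≤ k' < k` one has
`(k'P)^{(1)} = (r'P)^{(1)} + (k' − r')P`. -/
theorem stmt_14 {ι : Type*} [Fintype ι] (P : Set (ι → ℝ))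
    (hP : ∃ V : Finset (ι → ℤ), P = convexHull ℝ ((fun (z : ι → ℤ) => fun i => (z i : ℝ)) '' (V : Set (ι → ℤ))))
    (c r' k : ℕ) (hc : IsLeast (codegSet P) c) (hr' : c ≤ r') (hk : r' < k)
    (h : intHull P k = intHull P r' + (((k - r' : ℕ) : ℝ)) • P) :
    ∀ k' : ℕ, r' ≤ k' → k' < k →
      intHull P k' = intHull P r' + (((k' - r' : ℕ) : ℝ)) • P :=
  stmt_14_general P hP r' k h
end

section
/- Let P ⊂ ℝ^d and Q ⊂ ℝ^e be alcoved polytopes such that Q is level and codeg(Q) ≥ dim(P) + 1. Then the Cartesian product P × Q ⊂ ℝ^{d+e} is level. -/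
/-!
Write `s` for the codegree of `P × Q`; an interior lattice point of `s(P × Q)` projects to
interior lattice points of `sP` and `sQ`, so `s ≥ codeg Q ≥ dim P + 1` and `P` is full-dimensional.
Given an interior lattice point `z` of `k(P × Q)`, split it factorwise.

On the `Q` side, levelness of `Q` writes `z_Q = y + w` with `y` interior in `rQ` and
`w ∈ (k - r)Q`. Dilates of an alcoved polytope have the integer decomposition property (round
`λ w` up coordinatewise), so `w = w₁ + w₂` with `w₁ ∈ (s - r)Q`, `w₂ ∈ (k - s)Q`, and `y + w₁` is
interior in `sQ` by convexity.

On the `P` side, an integer `y` interior in `sP` with `z_P - y ∈ (k - s)P` is an integral solution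
of a system of difference constraints in the coordinates `z_0 = 0, z_1, …, z_d`. Such a system
is solvable (by a Bellman–Ford potential) as soon as its constraint graph has no negative cycle,
and a simple cycle has at most `d + 1 ≤ s` edges, which is what makes every cycle nonnegative.
-/

open scoped Pointwise

/-- The Cartesian product `P × Q ⊆ ℝ^{d+e}`. -/
def prodSet {ι κ : Type*} (P : Set (ι → ℝ)) (Q : Set (κ → ℝ)) : Set (ι ⊕ κ → ℝ) :=
  {x | (fun i => x (Sum.inl i)) ∈ P ∧ (fun j => x (Sum.inr j)) ∈ Q}

lemma Int.ceil_sub_ceil_le_of_sub_le {R : Type*} [Ring R] [LinearOrder R] [FloorRing R]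
    [IsOrderedRing R] {a b : R} {z : ℤ} (h : a - b ≤ z) : ⌈a⌉ - ⌈b⌉ ≤ z := by
  have := Int.ceil_le_ceil (sub_le_iff_le_add'.mp h)
  rw [Int.ceil_add_intCast] at this
  omega

lemma ceil_mul_sub_ceil_mul_le {lam : ℝ} {p q M a b : ℤ} (hlam : lam * (p + q) = p)
    (hlam₀ : 0 ≤ lam) (hlam₁ : lam ≤ 1) (hab : a - b ≤ (p + q) * M) :
    ⌈lam * a⌉ - ⌈lam * b⌉ ≤ p * M ∧ (a - ⌈lam * a⌉) - (b - ⌈lam * b⌉) ≤ q * M := by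
  have hab' : (a - b : ℝ) ≤ (p + q) * M := by exact_mod_cast hab
  refine ⟨Int.ceil_sub_ceil_le_of_sub_le ?_, ?_⟩
  · push_cast
    linear_combination mul_le_mul_of_nonneg_left hab' hlam₀ + (M : ℝ) * hlam
  · have := Int.ceil_sub_ceil_le_of_sub_le (a := lam * b) (b := lam * a) (z := q * M - (a - b)) (by
      push_cast
      linear_combination mul_le_mul_of_nonneg_left hab' (sub_nonneg.mpr hlam₁) - (M : ℝ) * hlam)
    omega

section Walk

variable {V α : Type*}

def walkWeight [AddCommMonoid α] (U : V → V → α) : List V → α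
  | a :: b :: l => U a b + walkWeight U (b :: l)
  | _ => 0

@[simp] lemma walkWeight_cons_cons [AddCommMonoid α] (U : V → V → α) (a b : V) (l : List V) :
    walkWeight U (a :: b :: l) = U a b + walkWeight U (b :: l) := rfl

@[simp] lemma walkWeight_singleton [AddCommMonoid α] (U : V → V → α) (a : V) :
    walkWeight U [a] = 0 := rfl

lemma walkWeight_append_cons [AddCommMonoid α] (U : V → V → α) (l₁ : List V) (x : V)
    (l₂ : List V) :
    walkWeight U (l₁ ++ x :: l₂) = walkWeight U (l₁ ++ [x]) + walkWeight U (x :: l₂) := by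
  induction l₁ with
  | nil => simp
  | cons a l ih =>
    cases l with
    | nil => simp
    | cons b l => simp only [List.cons_append, walkWeight_cons_cons] at ih ⊢; rw [ih, add_assoc]

lemma List.exists_append_cons_append_cons_of_not_nodup {l : List V} (h : ¬ l.Nodup) :
    ∃ s x t u, l = s ++ x :: (t ++ x :: u) ∧ (x :: t).Nodup := by
  induction l with
  | nil => exact absurd List.nodup_nil h
  | cons a l ih =>
    by_cases hl : l.Nodup
    · obtain ⟨t, u, rfl⟩ := List.append_of_mem (by simpa [List.nodup_cons, hl] using h)
      exact ⟨[], a, t, u, rfl, (List.nodup_middle.mp hl).sublist (by simp)⟩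
    · obtain ⟨s, x, t, u, rfl, hxt⟩ := ih hl
      exact ⟨a :: s, x, t, u, rfl, hxt⟩

lemma exists_nodup_walkWeight_le [Fintype V] [AddCommMonoid α] [PartialOrder α]
    [IsOrderedAddMonoid α] (U : V → V → α)
    (hU : ∀ a l, l.length < Fintype.card V → 0 ≤ walkWeight U (a :: (l ++ [a])))
    (l : List V) : ∃ l', l'.Nodup ∧ walkWeight U l' ≤ walkWeight U l := by
  induction hn : l.length using Nat.strong_induction_on generalizing l with
  | _ n ih =>
  by_cases hl : l.Nodup
  · exact ⟨l, hl, le_rfl⟩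
  obtain ⟨s, x, t, u, rfl, hxt⟩ := List.exists_append_cons_append_cons_of_not_nodup hl
  obtain ⟨l', hl', hle⟩ := ih _ (by simp [← hn]) (s ++ x :: u) rfl
  have hcycle : 0 ≤ walkWeight U (x :: (t ++ [x])) :=
    hU x t (by simpa using hxt.length_le_card)
  refine ⟨l', hl', hle.trans ?_⟩
  calc walkWeight U (s ++ x :: u) = walkWeight U (s ++ [x]) + walkWeight U (x :: u) :=
        walkWeight_append_cons U s x u
    _ ≤ walkWeight U (s ++ [x]) + (walkWeight U (x :: (t ++ [x])) + walkWeight U (x :: u)) := by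
        gcongr; exact le_add_of_nonneg_left hcycle
    _ = walkWeight U (s ++ x :: (t ++ x :: u)) := by
        rw [walkWeight_append_cons U s x (t ++ x :: u)]
        exact congrArg _ (walkWeight_append_cons U (x :: t) x u).symm

theorem exists_potential_of_walkWeight_nonneg [Fintype V] [AddCommGroup α]
    [ConditionallyCompleteLinearOrder α] [IsOrderedAddMonoid α] (U : V → V → α)
    (hU : ∀ a l, l.length < Fintype.card V → 0 ≤ walkWeight U (a :: (l ++ [a]))) :
    ∃ w : V → α, ∀ a b, w a - w b ≤ U a b := by
  have hbdd : ∀ a, BddBelow (Set.range fun l => walkWeight U (a :: l)) := by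
    obtain ⟨c, hc⟩ :=
      (Set.finite_range fun l : {l : List V // l.Nodup} => walkWeight U l.1).bddBelow
    refine fun a => ⟨c, ?_⟩
    rintro - ⟨l, rfl⟩
    obtain ⟨l', hl', hle⟩ := exists_nodup_walkWeight_le U hU (a :: l)
    exact (hc ⟨⟨l', hl'⟩, rfl⟩).trans hle
  refine ⟨fun a => ⨅ l, walkWeight U (a :: l), fun a b => sub_le_comm.mp ?_⟩
  exact le_ciInf fun l => sub_le_iff_le_add'.mpr (ciInf_le (hbdd a) (b :: l))

lemma le_walkWeight_of_forall_le [CommRing α] [LinearOrder α] [IsStrictOrderedRing α]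
    (U n : V → V → α) (x : V → α) (c e : α) (hU : ∀ a b, c * n a b + (x a - x b) + e ≤ U a b)
    (a b : V) (l : List V) :
    c * walkWeight n (a :: (l ++ [b])) + (x a - x b) + (l.length + 1) * e ≤
      walkWeight U (a :: (l ++ [b])) := by
  induction l generalizing a with
  | nil => simpa using hU a b
  | cons d l ih =>
    simp only [List.cons_append, walkWeight_cons_cons, List.length_cons, Nat.cast_succ]
    linarith [ih d, hU a d]

end Walk

theorem exists_sub_lt_and_sub_sub_le {V : Type*} [Fintype V] (C : V → V → Prop)
    (m : V → V → ℤ) (x : V → ℤ) {t k : ℤ} (htk : t ≤ k) (hcard : (Fintype.card V : ℤ) ≤ t)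
    (hx : ∀ a b, C a b → x a - x b < k * m a b) :
    ∃ y : V → ℤ, ∀ a b, C a b →
      y a - y b < t * m a b ∧ (x a - y a) - (x b - y b) ≤ (k - t) * m a b := by
  classical
  -- The edge `a → b` bounds `y a - y b` through the constraint on `(a, b)` (first conclusion)
  -- and through the constraint on `(b, a)` (second conclusion); a missing constraint is
  -- replaced by a bound that is harmless in the cycle estimate below.
  let A : V → V → ℤ := fun a b => if C a b then t * m a b - 1 else max (x a - x b) 0
  let B : V → V → ℤ := fun a b =>
    if C b a then (k - t) * m b a + (x a - x b) else max (x a - x b) 0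
  let U : V → V → ℤ := fun a b => min (A a b) (B a b)
  have hedge : ∀ a b, ∃ n : ℤ, -(k - t) * n + (x a - x b) ≤ U a b ∧ t * n - 1 ≤ U a b := by
    intro a b
    rcases min_choice (A a b) (B a b) with h | h <;> simp only [U, h] <;> simp only [A, B] <;>
      split_ifs with hC
    · exact ⟨m a b, by linarith [hx a b hC], by linarith⟩
    · exact ⟨0, by simp, by simp⟩
    · exact ⟨-m b a, by linarith, by linarith [hx b a hC]⟩
    · exact ⟨0, by simp, by simp⟩
  choose n hn using hedge
  obtain ⟨y, hy⟩ := exists_potential_of_walkWeight_nonneg U fun a l hl => by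
      -- Along a cycle with `L ≤ t` edges and `N = ∑ n`, the two edge bounds give weight
      -- `≥ -(k - t) N` and `≥ t N - L`; one of these is nonnegative.
      have h₁ := le_walkWeight_of_forall_le U n x (-(k - t)) 0
        (fun a b => by linarith [(hn a b).1]) a a l
      have h₂ := le_walkWeight_of_forall_le U n 0 t (-1) (fun a b => by simpa using (hn a b).2)
        a a l
      have hL : (l.length : ℤ) + 1 ≤ t := by omega
      simp only [sub_self, add_zero, Pi.zero_apply] at h₁ h₂
      rcases le_or_gt (walkWeight n (a :: (l ++ [a]))) 0 with hN | hN <;> nlinarith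
  refine ⟨y, fun a b hab => ⟨?_, ?_⟩⟩
  · have := (hy a b).trans (min_le_left _ _)
    simp only [A, if_pos hab] at this
    linarith
  · have := (hy b a).trans (min_le_right _ _)
    simp only [B, if_pos hab] at this
    linarith

section OptionElim

variable {ι : Type*}

@[simp] lemma Option.elim'_zero_intCast (z : ι → ℤ) (a : Option ι) :
    Option.elim' 0 (fun i => (z i : ℝ)) a = ((Option.elim' 0 z a : ℤ) : ℝ) := by
  cases a <;> simp

@[simp] lemma Option.elim'_zero_ceil (x : ι → ℝ) (a : Option ι) :
    Option.elim' 0 (fun i => ⌈x i⌉) a = ⌈Option.elim' 0 x a⌉ := by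
  cases a <;> simp

@[simp] lemma Option.elim'_zero_add {R : Type*} [AddZeroClass R] (x y : ι → R) (a : Option ι) :
    Option.elim' 0 (x + y) a = Option.elim' 0 x a + Option.elim' 0 y a := by
  cases a <;> simp

@[simp] lemma Option.elim'_zero_sub {R : Type*} [AddGroup R] (x y : ι → R) (a : Option ι) :
    Option.elim' 0 (x - y) a = Option.elim' 0 x a - Option.elim' 0 y a := by
  cases a <;> simp

@[simp] lemma Option.elim'_zero_smul (c : ℝ) (x : ι → ℝ) (a : Option ι) :
    Option.elim' 0 (c • x) a = c * Option.elim' 0 x a := by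
  cases a <;> simp

lemma Option.continuous_elim'_zero (a : Option ι) :
    Continuous fun x : ι → ℝ => Option.elim' 0 x a := by
  cases a
  · exact continuous_const
  · exact continuous_apply _

end OptionElim

section AlcovedSet

variable {ι : Type*}

lemma exists_eq_elim'_sub_of_mem_alcFun {f : (ι → ℝ) → ℝ} (hf : f ∈ alcFun ι) :
    ∃ a b : Option ι, f = fun x => Option.elim' 0 x a - Option.elim' 0 x b := by
  rcases hf with ⟨i, j, rfl⟩ | ⟨i, rfl⟩ | ⟨j, rfl⟩
  · exact ⟨some i, some j, rfl⟩
  · exact ⟨some i, none, by simp⟩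
  · exact ⟨none, some j, by simp⟩

-- `Option.elim' 0 x` is `x` extended by the coordinate `z_0 = 0` at `none`; `C a b` says that
-- the inequality `z_a - z_b ≤ c * m a b` is imposed.
def alcovedSet (C : Option ι → Option ι → Prop) (m : Option ι → Option ι → ℤ) (c : ℝ) :
    Set (ι → ℝ) :=
  {x | ∀ a b, C a b → Option.elim' 0 x a - Option.elim' 0 x b ≤ c * m a b}

variable {C : Option ι → Option ι → Prop} {m : Option ι → Option ι → ℤ}

lemma smul_alcovedSet {c : ℝ} (hc : 0 < c) (c' : ℝ) :
    c • alcovedSet C m c' = alcovedSet C m (c * c') := by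
  ext x
  rw [Set.mem_smul_set]
  constructor
  · rintro ⟨y, hy, rfl⟩ a b hab
    have := mul_le_mul_of_nonneg_left (hy a b hab) hc.le
    simp only [Option.elim'_zero_smul]
    linarith
  · intro hx
    refine ⟨c⁻¹ • x, fun a b hab => ?_, smul_inv_smul₀ hc.ne' x⟩
    rw [Option.elim'_zero_smul, Option.elim'_zero_smul, ← mul_sub, inv_mul_le_iff₀ hc, ← mul_assoc]
    exact hx a b hab

lemma interior_alcovedSet [Finite ι] (hC : ∀ a b, C a b → a ≠ b) (c : ℝ) :
    interior (alcovedSet C m c) =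
      {x | ∀ a b, C a b → Option.elim' 0 x a - Option.elim' 0 x b < c * m a b} := by
  apply subset_antisymm
  · intro x hx a b hab
    obtain ⟨v, hv⟩ : ∃ v : ι → ℝ, 0 < Option.elim' 0 v a - Option.elim' 0 v b := by
      classical
      rcases a with _ | i <;> rcases b with _ | j
      · exact absurd rfl (hC _ _ hab)
      · exact ⟨-Pi.single j 1, by simp⟩
      · exact ⟨Pi.single i 1, by simp⟩
      · have hij : j ≠ i := fun h => hC _ _ hab (by rw [h])
        exact ⟨Pi.single i 1, by simp [hij]⟩
    have hline : ∀ᶠ ε in nhdsWithin (0 : ℝ) (Set.Ioi 0), x + ε • v ∈ alcovedSet C m c := by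
      have hcont : Continuous fun ε : ℝ => x + ε • v := by fun_prop
      exact ((hcont.tendsto' 0 x (by simp)).eventually
        (mem_interior_iff_mem_nhds.mp hx)).filter_mono nhdsWithin_le_nhds
    obtain ⟨ε, hε, hεpos⟩ := (hline.and self_mem_nhdsWithin).exists
    have := hε a b hab
    simp only [Option.elim'_zero_add, Option.elim'_zero_smul] at this
    nlinarith [mul_pos (Set.mem_Ioi.mp hεpos) hv]
  · refine interior_maximal (fun x hx a b hab => (hx a b hab).le) ?_
    simp only [Set.ofPred_forall]
    exact isOpen_iInter_of_finite fun a => isOpen_iInter_of_finite fun b =>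
      isOpen_iInter_of_finite fun _ =>
        isOpen_lt ((Option.continuous_elim'_zero a).sub (Option.continuous_elim'_zero b))
          continuous_const

lemma IsAlcoved.exists_eq_alcovedSet [Fintype ι] {P : Set (ι → ℝ)} (hP : IsAlcoved P)
    (hne : P.Nonempty) :
    ∃ (C : Option ι → Option ι → Prop) (m : Option ι → Option ι → ℤ),
      (∀ a b, C a b → a ≠ b) ∧ P = alcovedSet C m 1 := by
  obtain ⟨-, F, mF, hF, rfl⟩ := hP
  obtain ⟨p, hp⟩ := hne
  -- The constraints `z_a - z_a ≤ m` hold on the nonempty `P`; dropping them keeps the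
  -- description of the interior by strict inequalities valid.
  let g : Option ι → Option ι → (ι → ℝ) → ℝ := fun a b x =>
    Option.elim' 0 x a - Option.elim' 0 x b
  refine ⟨fun a b => g a b ∈ F ∧ a ≠ b, fun a b => mF (g a b), fun a b h => h.2, ?_⟩
  ext x
  refine ⟨fun hx a b hab => by rw [one_mul]; exact hx _ hab.1, fun hx f hf => ?_⟩
  obtain ⟨a, b, rfl⟩ := exists_eq_elim'_sub_of_mem_alcFun (hF hf)
  by_cases hab : a = b
  · subst hab
    simpa using hp _ hf
  · simpa using hx a b ⟨hf, hab⟩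

lemma IsAlcoved.convex [Fintype ι] {P : Set (ι → ℝ)} (hP : IsAlcoved P) :
    Convex ℝ P := by
  obtain ⟨-, F, mF, hF, rfl⟩ := hP
  simp only [Set.ofPred_forall]
  refine convex_iInter₂ fun f hf => convex_halfSpace_le ?_ _
  obtain ⟨a, b, rfl⟩ := exists_eq_elim'_sub_of_mem_alcFun (hF hf)
  constructor <;> intros <;>
    simp only [Option.elim'_zero_add, Option.elim'_zero_smul, smul_eq_mul] <;> ring

theorem IsAlcoved.exists_add_of_mem_smul [Fintype ι] {Q : Set (ι → ℝ)} (hQ : IsAlcoved Q) (p q : ℕ)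
    (w : ι → ℤ) (hw : (fun i => (w i : ℝ)) ∈ ((p + q : ℕ) : ℝ) • Q) :
    ∃ w₁ w₂ : ι → ℤ, (fun i => (w₁ i : ℝ)) ∈ (p : ℝ) • Q ∧
      (fun i => (w₂ i : ℝ)) ∈ (q : ℝ) • Q ∧ w = w₁ + w₂ := by
  have hne : Q.Nonempty := Set.smul_set_nonempty.mp ⟨_, hw⟩
  rcases Nat.eq_zero_or_pos p with rfl | hp
  · exact ⟨0, w, by simp [Set.zero_smul_set hne, Pi.zero_def], by simpa using hw, by simp⟩
  rcases Nat.eq_zero_or_pos q with rfl | hq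
  · exact ⟨w, 0, by simpa using hw, by simp [Set.zero_smul_set hne, Pi.zero_def], by simp⟩
  obtain ⟨C, m, -, rfl⟩ := hQ.exists_eq_alcovedSet hne
  have hN : (0 : ℝ) < ((p + q : ℕ) : ℝ) := by positivity
  rw [smul_alcovedSet hN, mul_one] at hw
  rw [smul_alcovedSet (by positivity), smul_alcovedSet (by positivity), mul_one, mul_one]
  set lam : ℝ := p / ((p + q : ℕ) : ℝ)
  have hlam : lam * (p + q) = p := by
    rw [← Nat.cast_add]
    exact div_mul_cancel₀ _ hN.ne'
  have hlam_nonneg : 0 ≤ lam := by positivity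
  have hlam_le : lam ≤ 1 := by
    have : (0 : ℝ) < q := by exact_mod_cast hq
    nlinarith
  set u : ι → ℝ := lam • fun i => (w i : ℝ)
  refine ⟨fun i => ⌈u i⌉, w - fun i => ⌈u i⌉, fun a b hab => ?_, fun a b hab => ?_, by abel⟩
  all_goals
    have hD := hw a b hab
    simp only [Option.elim'_zero_intCast, Option.elim'_zero_sub, Option.elim'_zero_ceil, u,
      Option.elim'_zero_smul] at hD ⊢
    have := ceil_mul_sub_ceil_mul_le (p := p) (q := q) (by exact_mod_cast hlam) hlam_nonneg
      hlam_le (by exact_mod_cast hD)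
  · exact_mod_cast this.1
  · exact_mod_cast this.2

theorem IsAlcoved.exists_mem_interior_add [Fintype ι] {P : Set (ι → ℝ)} (hP : IsAlcoved P)
    {k t : ℕ} (htk : t ≤ k) (ht : Fintype.card ι < t) (z : ι → ℤ)
    (hz : (fun i => (z i : ℝ)) ∈ interior ((k : ℝ) • P)) :
    ∃ y w : ι → ℤ, (fun i => (y i : ℝ)) ∈ interior ((t : ℝ) • P) ∧
      (fun i => (w i : ℝ)) ∈ ((k - t : ℕ) : ℝ) • P ∧ z = y + w := by
  have hne : P.Nonempty := Set.smul_set_nonempty.mp ⟨_, interior_subset hz⟩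
  rcases htk.eq_or_lt with rfl | htk
  · exact ⟨z, 0, hz, by simp [Set.zero_smul_set hne, Pi.zero_def], by simp⟩
  obtain ⟨C, m, hC, rfl⟩ := hP.exists_eq_alcovedSet hne
  have ht₀ : (0 : ℝ) < t := by exact_mod_cast (Nat.zero_le _).trans_lt ht
  rw [smul_alcovedSet (ht₀.trans (by exact_mod_cast htk)), mul_one, interior_alcovedSet hC] at hz
  rw [smul_alcovedSet ht₀, smul_alcovedSet (by simp [htk]), mul_one, mul_one,
    interior_alcovedSet hC]
  obtain ⟨y, hy⟩ := exists_sub_lt_and_sub_sub_le C m (Option.elim' 0 z) (t := t) (k := k)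
    (by exact_mod_cast htk.le) (by simp; omega) fun a b hab => by
      have := hz a b hab
      simp only [Option.elim'_zero_intCast] at this
      exact_mod_cast this
  have hy' : ∀ a, Option.elim' 0 (fun i => y (some i) - y none) a = y a - y none := by
    rintro (_ | i) <;> simp
  refine ⟨fun i => y (some i) - y none, z - fun i => y (some i) - y none, fun a b hab => ?_,
    fun a b hab => ?_, by abel⟩
  · simp only [Option.elim'_zero_intCast, hy']
    exact_mod_cast (by linarith [(hy a b hab).1] : y a - y none - (y b - y none) < t * m a b)
  · simp only [Option.elim'_zero_intCast, Option.elim'_zero_sub, hy']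
    push_cast [htk.le]
    exact_mod_cast (by linarith [(hy a b hab).2] :
      Option.elim' 0 z a - (y a - y none) - (Option.elim' 0 z b - (y b - y none)) ≤
        (k - t) * m a b)

end AlcovedSet

section Product

variable {ι κ : Type*}

lemma smul_prodSet (P : Set (ι → ℝ)) (Q : Set (κ → ℝ)) (c : ℝ) :
    c • prodSet P Q = prodSet (c • P) (c • Q) := by
  ext x
  constructor
  · rintro ⟨p, hp, rfl⟩
    exact ⟨⟨_, hp.1, rfl⟩, ⟨_, hp.2, rfl⟩⟩
  · rintro ⟨⟨p, hp, hpx⟩, ⟨q, hq, hqx⟩⟩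
    refine ⟨Sum.elim p q, ⟨hp, hq⟩, funext fun i => ?_⟩
    cases i with
    | inl i => exact congrFun hpx i
    | inr j => exact congrFun hqx j

lemma interior_prodSet (P : Set (ι → ℝ)) (Q : Set (κ → ℝ)) :
    interior (prodSet P Q) = prodSet (interior P) (interior Q) := by
  have h : ∀ (A : Set (ι → ℝ)) (B : Set (κ → ℝ)),
      prodSet A B = Homeomorph.sumArrowHomeomorphProdArrow ⁻¹' (A ×ˢ B) := fun _ _ => rfl
  rw [h, h, ← Homeomorph.preimage_interior, interior_prod_eq]

end Product

lemma Convex.add_mem_interior_add_smul {E : Type*} [AddCommGroup E] [Module ℝ E]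
    [TopologicalSpace E] [IsTopologicalAddGroup E] {Q : Set E} (hQ : Convex ℝ Q) {p q : ℝ}
    (hp : 0 ≤ p) (hq : 0 ≤ q) {x y : E} (hx : x ∈ interior (p • Q)) (hy : y ∈ q • Q) :
    x + y ∈ interior ((p + q) • Q) := by
  rw [hQ.add_smul hp hq]
  exact subset_interior_add_left (Set.add_mem_add hx hy)

lemma finrank_vectorSpan_of_interior_nonempty {ι : Type*} [Fintype ι] {P : Set (ι → ℝ)}
    (h : (interior P).Nonempty) :
    Module.finrank ℝ (vectorSpan ℝ P) = Fintype.card ι := by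
  have hspan : affineSpan ℝ P = ⊤ :=
    top_unique <| isOpen_interior.affineSpan_eq_top h ▸ affineSpan_mono ℝ interior_subset
  rw [← direction_affineSpan, hspan, AffineSubspace.direction_top, finrank_top,
    Module.finrank_pi]

/-- If `P` and `Q` are alcoved polytopes, `Q` is level, and
`codeg(Q) ≥ dim P + 1`, then `P × Q` is level. -/
theorem stmt_15 {ι κ : Type*} [Fintype ι] [Fintype κ]
    (P : Set (ι → ℝ)) (Q : Set (κ → ℝ)) (hP : IsAlcoved P) (hQ : IsAlcoved Q)
    (r : ℕ) (hrQ : IsLeast (codegSet Q) r) (hQlevel : IsLevel Q r)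
    (hdim : Module.finrank ℝ (vectorSpan ℝ P) + 1 ≤ r) :
    ∀ s : ℕ, IsLeast (codegSet (prodSet P Q)) s → IsLevel (prodSet P Q) s := by
  rintro s ⟨⟨hs, z₀, hz₀⟩, -⟩ k z hsk hz
  rw [smul_prodSet, interior_prodSet] at hz₀ hz
  have hrs : r ≤ s := hrQ.2 ⟨hs, _, hz₀.2⟩
  have hcard : Fintype.card ι < s := by
    have hint : (interior ((s : ℝ) • P)).Nonempty := ⟨_, hz₀.1⟩
    rw [interior_smul₀ (Nat.cast_pos.mpr hs).ne', Set.smul_set_nonempty] at hint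
    rw [finrank_vectorSpan_of_interior_nonempty hint] at hdim
    omega
  obtain ⟨yP, wP, hyP, hwP, hzP⟩ := hP.exists_mem_interior_add hsk hcard _ hz.1
  obtain ⟨yQ, wQ, hyQ, hwQ, hzQ⟩ := hQlevel k _ (hrs.trans hsk) hz.2
  obtain ⟨w₁, w₂, hw₁, hw₂, rfl⟩ := hQ.exists_add_of_mem_smul (s - r) (k - s) wQ
    (by rwa [show s - r + (k - s) = k - r by omega])
  have hyQ' := Convex.add_mem_interior_add_smul hQ.convex r.cast_nonneg (s - r).cast_nonneg hyQ hw₁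
  rw [← Nat.cast_add, Nat.add_sub_cancel' hrs] at hyQ'
  refine ⟨Sum.elim yP (yQ + w₁), Sum.elim wP w₂, ?_, ?_, ?_⟩
  · rw [smul_prodSet, interior_prodSet]
    exact ⟨hyP, by simpa [Pi.add_def] using hyQ'⟩
  · rw [smul_prodSet]
    exact ⟨hwP, hw₂⟩
  · funext i
    cases i with
    | inl i => exact congrFun hzP i
    | inr j => simp [congrFun hzQ j, add_assoc]
end

section
/- Let Π be a finite poset on d elements and C_s a chain (totally ordered set) with s elements, with all elements of Π incomparable to all elements of C_s. If s ≥ d, then the disjoint-union poset Π ⊔ C_s is level. -/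
/-!
The codegree of `Π ⊔ C_s` is `s + 1`, and an interior point of the cone over `Π ⊔ C_s` is a
pair of interior points of the cones over `Π` and `C_s`, so it suffices to decompose each part
separately at height `s + 1`. For a finite poset `γ` with `#γ < c` and an interior point `x`
of height `k > c`, some threshold `t ∈ [2, k - 1]` is not a value of `x` on a non-minimal
element, because `[2, k - 1]` has `k - 2 ≥ #γ` values. The indicator of `{x ≥ t}` is then an
order filter whose removal leaves an interior point of height `k - 1`; iterating lowers the
height to `c`.
-/

open Finset Sum

section
variable {γ : Type*} [PartialOrder γ]

theorem OIntPt.mono {c c' : ℕ} {x : γ → ℤ} (hx : OIntPt γ c x) (hc : c ≤ c') :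
    OIntPt γ c' x :=
  ⟨fun i => ⟨(hx.1 i).1, (hx.1 i).2.trans_le (by exact_mod_cast hc)⟩, hx.2⟩

theorem OConePt.add {a b : ℕ} {z w : γ → ℤ} (hz : OConePt γ a z) (hw : OConePt γ b w) :
    OConePt γ (a + b) (z + w) := by
  refine ⟨fun i => ?_, fun i j hij => add_le_add (hz.2 i j hij) (hw.2 i j hij)⟩
  have := hz.1 i
  have := hw.1 i
  simp only [Pi.add_apply, Nat.cast_add]
  omega

theorem oConePt_zero : OConePt γ 0 0 :=
  ⟨fun _ => ⟨le_rfl, le_rfl⟩, fun _ _ _ => le_rfl⟩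

theorem card_lt_of_oIntPt {γ : Type*} [LinearOrder γ] [Fintype γ] {c : ℕ} {x : γ → ℤ}
    (hc : 0 < c) (hx : OIntPt γ c x) : Fintype.card γ < c := by
  have hmaps : Set.MapsTo x (univ : Finset γ) (Ioo 0 (c : ℤ)) :=
    fun i _ => mem_Ioo.2 (hx.1 i)
  have hinj : Set.InjOn x (univ : Finset γ) := (StrictMono.injective hx.2).injOn
  have := card_le_card_of_injOn x hmaps hinj
  rw [card_univ, Int.card_Ioo] at this
  omega

theorem exists_oIntPt_card_add_one [Fintype γ] :
    ∃ x : γ → ℤ, OIntPt γ (Fintype.card γ + 1) x := by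
  classical
  refine ⟨fun a => #{b | b < a} + 1, fun a => ⟨by positivity, ?_⟩, fun a b hab => ?_⟩
  · have : #{b | b < a} < Fintype.card γ :=
      card_lt_card (filter_ssubset.2 ⟨a, mem_univ a, lt_irrefl a⟩)
    push_cast
    omega
  · have : #{c | c < a} < #{c | c < b} := by
      refine card_lt_card ⟨fun c hc => ?_, fun hsub => ?_⟩
      · simp only [mem_filter, mem_univ, true_and] at hc ⊢
        exact hc.trans hab
      · simpa using hsub (by simpa using hab : a ∈ ({c | c < b} : Finset γ))
    push_cast
    omega

theorem exists_threshold_avoiding_not_isMin [Fintype γ] [Nonempty γ] {k : ℕ}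
    (hk : Fintype.card γ + 2 ≤ k) (x : γ → ℤ) :
    ∃ t : ℤ, 2 ≤ t ∧ t ≤ k - 1 ∧ ∀ w, ¬IsMin w → x w ≠ t := by
  classical
  obtain ⟨m, hm⟩ := exists_minimal (univ_nonempty (α := γ))
  have hnonmin : #{w | ¬IsMin w} < Fintype.card γ :=
    card_lt_card (filter_ssubset.2 ⟨m, mem_univ m, not_not.2 (by simpa using hm)⟩)
  have hbad : #(({w | ¬IsMin w} : Finset γ).image x) < #(Icc (2 : ℤ) (k - 1)) := by
    have := card_image_le (s := ({w | ¬IsMin w} : Finset γ)) (f := x)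
    rw [Int.card_Icc]
    omega
  obtain ⟨t, ht, htbad⟩ := exists_mem_notMem_of_card_lt_card hbad
  rw [mem_Icc] at ht
  exact ⟨t, ht.1, ht.2, fun w hw hxw => htbad (mem_image.2 ⟨w, by simpa using hw, hxw⟩)⟩

theorem OIntPt.exists_sub_oConePt_one [Fintype γ] {k : ℕ} {x : γ → ℤ}
    (hk : Fintype.card γ + 2 ≤ k) (hx : OIntPt γ k x) :
    ∃ χ : γ → ℤ, OConePt γ 1 χ ∧ OIntPt γ (k - 1) (x - χ) := by
  rcases isEmpty_or_nonempty γ with _ | _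
  · exact ⟨0, ⟨isEmptyElim, fun i => isEmptyElim i⟩, isEmptyElim, fun i => isEmptyElim i⟩
  obtain ⟨t, ht2, htk, hmin⟩ := exists_threshold_avoiding_not_isMin hk x
  have hkc : ((k - 1 : ℕ) : ℤ) = k - 1 := by omega
  refine ⟨fun i => if t ≤ x i then 1 else 0, ⟨fun i => ?_, fun i j hij => ?_⟩,
    ⟨fun i => ?_, fun i j hij => ?_⟩⟩
  · dsimp only
    split_ifs <;> simp
  · have : x i ≤ x j := hij.eq_or_lt.elim (fun h => h ▸ le_rfl) fun h => (hx.2 i j h).le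
    dsimp only
    split_ifs <;> omega
  · have := hx.1 i
    simp only [Pi.sub_apply, hkc]
    split_ifs <;> omega
  · have := hx.2 i j hij
    have := hmin j (not_isMin_of_lt hij)
    simp only [Pi.sub_apply]
    split_ifs <;> omega

theorem OIntPt.exists_sub_oConePt [Fintype γ] {c : ℕ} (hc : Fintype.card γ < c) {k : ℕ}
    {x : γ → ℤ} (hx : OIntPt γ k x) :
    ∃ y, OIntPt γ c y ∧ OConePt γ (k - c) (x - y) := by
  induction k using Nat.strong_induction_on generalizing x with
  | _ k ih =>
    by_cases hkc : k ≤ c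
    · exact ⟨x, hx.mono hkc, by simpa [Nat.sub_eq_zero_of_le hkc] using oConePt_zero⟩
    obtain ⟨χ, hχ, hxχ⟩ := hx.exists_sub_oConePt_one (by omega)
    obtain ⟨y, hy, hz⟩ := ih (k - 1) (by omega) hxχ
    refine ⟨y, hy, ?_⟩
    have := hz.add hχ
    rwa [sub_right_comm, sub_add_cancel, show k - 1 - c + 1 = k - c by omega] at this

end

section
variable {α β : Type*} [PartialOrder α] [PartialOrder β]

theorem oIntPt_sum_iff {c : ℕ} {x : α ⊕ β → ℤ} :
    OIntPt (α ⊕ β) c x ↔ OIntPt α c (x ∘ inl) ∧ OIntPt β c (x ∘ inr) := by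
  simp only [OIntPt, Sum.forall, inl_lt_inl_iff, inr_lt_inr_iff, not_inl_lt_inr,
    not_inr_lt_inl, Function.comp_apply, IsEmpty.forall_iff, implies_true, and_true, true_and]
  tauto

theorem oConePt_sum_iff {c : ℕ} {x : α ⊕ β → ℤ} :
    OConePt (α ⊕ β) c x ↔ OConePt α c (x ∘ inl) ∧ OConePt β c (x ∘ inr) := by
  simp only [OConePt, Sum.forall, inl_le_inl_iff, inr_le_inr_iff, not_inl_le_inr,
    not_inr_le_inl, Function.comp_apply, IsEmpty.forall_iff, implies_true, and_true, true_and]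
  tauto

theorem posetCodeg_sum_fin [Fintype α] {s : ℕ} (hs : Fintype.card α ≤ s) :
    posetCodeg (α ⊕ Fin s) = s + 1 := by
  refine IsLeast.csInf_eq ⟨⟨s.succ_pos, ?_⟩, ?_⟩
  · obtain ⟨xa, hxa⟩ := exists_oIntPt_card_add_one (γ := α)
    obtain ⟨xb, hxb⟩ := exists_oIntPt_card_add_one (γ := Fin s)
    rw [Fintype.card_fin] at hxb
    exact ⟨Sum.elim xa xb, oIntPt_sum_iff.2 ⟨hxa.mono (by omega), hxb⟩⟩
  · rintro c ⟨hc, x, hx⟩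
    simpa using card_lt_of_oIntPt hc (oIntPt_sum_iff.1 hx).2

end

/-- Let `Π` be a poset on `d` elements and `C_s` a chain with `s` elements, with all
elements of `Π` incomparable to all elements of `C_s`. If `s ≥ d`, then the disjoint
union `Π ⊔ C_s` is level. (The disjoint-union order on `α ⊕ Fin s` is the one in which
`inl` and `inr` elements are incomparable.) -/
theorem stmt_16 (α : Type*) [PartialOrder α] [Fintype α] (s : ℕ)
    (hs : Fintype.card α ≤ s) :
    PosetLevel (α ⊕ Fin s) := by
  intro k x hx
  rw [posetCodeg_sum_fin hs]
  obtain ⟨hxα, hxs⟩ := oIntPt_sum_iff.1 hx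
  obtain ⟨yα, hyα, hzα⟩ := hxα.exists_sub_oConePt (c := s + 1) (by omega)
  obtain ⟨ys, hys, hzs⟩ := hxs.exists_sub_oConePt (c := s + 1) (by simp)
  exact ⟨Sum.elim yα ys, oIntPt_sum_iff.2 ⟨hyα, hys⟩, oConePt_sum_iff.2 ⟨hzα, hzs⟩⟩
end

section
/- Let P = conv{(0,0,0),(1,0,0),(0,1,0),(1,1,2)} ⊂ ℝ³ and Q = conv{(0,0),(1,0),(0,1)} ⊂ ℝ². Then P and Q are both level (indeed Gorenstein), but the Cartesian product P × Q ⊂ ℝ⁵ is not level: the lattice point (2,2,2,2,1) lies in int(4(P×Q)) but cannot be written as x₁ + x₂ with x₁ ∈ int(3(P×Q)) ∩ ℤ⁵ and x₂ ∈ (P×Q) ∩ ℤ⁵, while codeg(P×Q) = 3. -/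
/-!
`P` and `Q` are cut out by integer facet inequalities, and the all-ones vector lies at lattice
distance one from every facet of `2P`, resp. `3Q`; so both are Gorenstein, hence level, and their
codegrees are read off the facet inequalities. In `P × Q` the factor `Q` pushes the codegree up
to `3`, while `(2,2,2)` is not an interior lattice point of `3P` plus a lattice point of `P`.
-/

open scoped Pointwise

/-- The simplex `P = conv{(0,0,0),(1,0,0),(0,1,0),(1,1,2)} ⊂ ℝ³`. -/
noncomputable def Pex : Set (Fin 3 → ℝ) :=
  convexHull ℝ {![0, 0, 0], ![1, 0, 0], ![0, 1, 0], ![1, 1, 2]}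

/-- The simplex `Q = conv{(0,0),(1,0),(0,1)} ⊂ ℝ²`. -/
noncomputable def Qex : Set (Fin 2 → ℝ) :=
  convexHull ℝ {![0, 0], ![1, 0], ![0, 1]}

/-- The lattice point `(2,2,2,2,1)` of `ℝ⁵ = ℝ³ × ℝ²`. -/
def zex : Fin 3 ⊕ Fin 2 → ℤ := Sum.elim ![2, 2, 2] ![2, 1]

open Matrix

section Polyhedron

variable {ι κ : Type*} [Fintype ι]

-- The dilate `t • {x | A x ≤ b}`, written out so that dilating only rescales the right-hand side.
def polyhedron (A : Matrix κ ι ℤ) (b : κ → ℤ) (t : ℝ) : Set (ι → ℝ) :=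
  {x | ∀ j, ∑ i, (A j i : ℝ) * x i ≤ t * b j}

variable {A : Matrix κ ι ℤ} {b : κ → ℤ}

theorem convex_polyhedron (t : ℝ) : Convex ℝ (polyhedron A b t) := by
  intro x hx y hy p q hp hq hpq j
  calc ∑ i, (A j i : ℝ) * (p • x + q • y) i
      = p * ∑ i, (A j i : ℝ) * x i + q * ∑ i, (A j i : ℝ) * y i := by
        simp only [Pi.add_apply, Pi.smul_apply, smul_eq_mul, Finset.mul_sum,
          ← Finset.sum_add_distrib]
        exact Finset.sum_congr rfl fun i _ => by ring
    _ ≤ p * (t * b j) + q * (t * b j) := by gcongr <;> [exact hx j; exact hy j]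
    _ = t * b j := by rw [← add_mul, hpq, one_mul]

theorem convexHull_eq_polyhedron {n : ℕ} (v : Fin n → ι → ℝ) (hv : ∀ k, v k ∈ polyhedron A b 1)
    (w : Fin n → (ι → ℝ) → ℝ) (hw₀ : ∀ x ∈ polyhedron A b 1, ∀ k, 0 ≤ w k x)
    (hw₁ : ∀ x, ∑ k, w k x = 1) (hwv : ∀ x, ∑ k, w k x • v k = x) :
    convexHull ℝ (Set.range v) = polyhedron A b 1 := by
  refine (convexHull_min (Set.range_subset_iff.2 hv) (convex_polyhedron 1)).antisymm
    fun x hx => ?_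
  rw [← hwv x]
  exact (convex_convexHull ℝ _).sum_mem (fun k _ => hw₀ x hx k) (hw₁ x)
    fun k _ => subset_convexHull ℝ _ ⟨k, rfl⟩

theorem smul_polyhedron {c : ℝ} (hc : 0 < c) (t : ℝ) :
    c • polyhedron A b t = polyhedron A b (c * t) := by
  ext x
  simp only [Set.mem_smul_set_iff_inv_smul_mem₀ hc.ne', polyhedron, Set.mem_ofPred_eq,
    Pi.smul_apply, smul_eq_mul, mul_left_comm _ c⁻¹, ← Finset.mul_sum, inv_mul_le_iff₀ hc,
    mul_assoc]

theorem smul_polyhedron_of_nonneg {c t : ℝ} (hc : 0 ≤ c) (hne : (polyhedron A b t).Nonempty)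
    (hbdd : polyhedron A b 0 ⊆ {0}) : c • polyhedron A b t = polyhedron A b (c * t) := by
  rcases hc.eq_or_lt with rfl | hc
  · rw [Set.zero_smul_set hne, zero_mul]
    exact (hbdd.antisymm <| Set.singleton_subset_iff.2 fun j => by simp).symm
  · exact smul_polyhedron hc t

theorem interior_setOf_sum_mul_le {a : ι → ℝ} (ha : a ≠ 0) (c : ℝ) :
    interior {x : ι → ℝ | ∑ i, a i * x i ≤ c} = {x | ∑ i, a i * x i < c} := by
  classical
  let f : StrongDual ℝ (ι → ℝ) := ∑ i, a i • ContinuousLinearMap.proj i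
  have hf (x : ι → ℝ) : f x = ∑ i, a i * x i := by simp [f]
  have hf₀ : f ≠ 0 := by
    obtain ⟨j, hj⟩ := Function.ne_iff.1 ha
    intro h
    exact hj (by simpa [hf, Pi.single_apply] using congr($h (Pi.single j 1)))
  have := (f.isOpenMap_of_ne_zero hf₀).preimage_interior_eq_interior_preimage f.continuous
    (Set.Iic c)
  simpa [interior_Iic, Set.preimage, hf] using this.symm

theorem interior_polyhedron [Finite κ] (hA : ∀ j, ∃ i, A j i ≠ 0) (t : ℝ) :
    interior (polyhedron A b t) = {x | ∀ j, ∑ i, (A j i : ℝ) * x i < t * b j} := by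
  have hrow (j : κ) : (fun i => (A j i : ℝ)) ≠ 0 := fun h => by
    obtain ⟨i, hi⟩ := hA j
    exact hi (by simpa using congrFun h i)
  have : polyhedron A b t = ⋂ j, {x | ∑ i, (A j i : ℝ) * x i ≤ t * b j} := by
    ext; simp [polyhedron]
  rw [this, interior_iInter_of_finite]
  simp_rw [interior_setOf_sum_mul_le (hrow _)]
  ext; simp

theorem intCast_mem_polyhedron_iff {n : ℕ} {z : ι → ℤ} :
    (fun i => (z i : ℝ)) ∈ polyhedron A b n ↔ ∀ j, ∑ i, A j i * z i ≤ n * b j := by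
  simp only [polyhedron, Set.mem_ofPred_eq]
  exact_mod_cast Iff.rfl

theorem intCast_mem_interior_polyhedron_iff [Finite κ] (hA : ∀ j, ∃ i, A j i ≠ 0) {n : ℕ}
    {z : ι → ℤ} :
    (fun i => (z i : ℝ)) ∈ interior (polyhedron A b n) ↔ ∀ j, ∑ i, A j i * z i < n * b j := by
  simp only [interior_polyhedron hA, Set.mem_ofPred_eq]
  exact_mod_cast Iff.rfl

theorem mem_codegSet_polyhedron_iff [Finite κ] (hA : ∀ j, ∃ i, A j i ≠ 0) {c : ℕ} :
    c ∈ codegSet (polyhedron A b 1) ↔ 0 < c ∧ ∃ z : ι → ℤ, ∀ j, ∑ i, A j i * z i < c * b j :=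
  and_congr_right fun hc => by
    simp_rw [smul_polyhedron (Nat.cast_pos.2 hc), mul_one, intCast_mem_interior_polyhedron_iff hA]

-- `u` lies at lattice distance one from every facet of `r • P`, while an interior lattice point of
-- `k • P` lies at distance at least one; so subtracting `u` lands in `(k - r) • P`.
theorem isLevel_polyhedron [Finite κ] (hA : ∀ j, ∃ i, A j i ≠ 0) (hne : (polyhedron A b 1).Nonempty)
    (hbdd : polyhedron A b 0 ⊆ {0}) {r : ℕ} (u : ι → ℤ)
    (hu : ∀ j, ∑ i, A j i * u i = r * b j - 1) : IsLevel (polyhedron A b 1) r := by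
  have hsmul (n : ℕ) : (n : ℝ) • polyhedron A b 1 = polyhedron A b n := by
    rw [smul_polyhedron_of_nonneg n.cast_nonneg hne hbdd, mul_one]
  intro k z hk hz
  rw [hsmul, intCast_mem_interior_polyhedron_iff hA] at hz
  refine ⟨u, z - u, ?_, ?_, (add_sub_cancel u z).symm⟩
  · rw [hsmul, intCast_mem_interior_polyhedron_iff hA]
    intro j
    linarith [hu j]
  · rw [hsmul, intCast_mem_polyhedron_iff]
    intro j
    simp only [Pi.sub_apply, mul_sub, Finset.sum_sub_distrib, Nat.cast_sub hk, sub_mul]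
    linarith [hz j, hu j]

theorem prodSet_polyhedron {ι' κ' : Type*} [Fintype ι'] (A' : Matrix κ' ι' ℤ) (b' : κ' → ℤ)
    (t : ℝ) :
    prodSet (polyhedron A b t) (polyhedron A' b' t) =
      polyhedron (fromBlocks A 0 0 A') (Sum.elim b b') t := by
  ext x
  simp [prodSet, polyhedron, Fintype.sum_sum_type, fromBlocks, Sum.forall]

end Polyhedron

def normalsP : Matrix (Fin 4) (Fin 3) ℤ := !![0, 0, -1; -2, 0, 1; 0, -2, 1; 2, 2, -1]

def boundsP : Fin 4 → ℤ := ![0, 0, 0, 2]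

def normalsQ : Matrix (Fin 3) (Fin 2) ℤ := !![-1, 0; 0, -1; 1, 1]

def boundsQ : Fin 3 → ℤ := ![0, 0, 1]

theorem mem_polyhedronP_iff {x : Fin 3 → ℝ} {t : ℝ} :
    x ∈ polyhedron normalsP boundsP t ↔
      0 ≤ x 2 ∧ x 2 ≤ 2 * x 0 ∧ x 2 ≤ 2 * x 1 ∧ 2 * x 0 + 2 * x 1 - x 2 ≤ 2 * t := by
  simp [polyhedron, Fin.forall_fin_succ, Fin.sum_univ_succ, normalsP, boundsP]
  intros
  constructor <;> intro <;> linarith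

theorem mem_polyhedronQ_iff {x : Fin 2 → ℝ} {t : ℝ} :
    x ∈ polyhedron normalsQ boundsQ t ↔ 0 ≤ x 0 ∧ 0 ≤ x 1 ∧ x 0 + x 1 ≤ t := by
  simp [polyhedron, Fin.forall_fin_succ, Fin.sum_univ_succ, normalsQ, boundsQ]

-- The barycentric coordinates are half the slacks of the facet inequalities.
theorem Pex_eq_polyhedron : Pex = polyhedron normalsP boundsP 1 := by
  have hP : Pex = convexHull ℝ (Set.range ![![0, 0, 0], ![1, 0, 0], ![0, 1, 0], ![1, 1, 2]]) := by
    simp only [Pex, Matrix.range_cons, Matrix.range_empty, Set.union_empty, Set.singleton_union]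
  rw [hP]
  refine convexHull_eq_polyhedron _ (fun k => ?_)
    (fun k x => ![1 - x 0 - x 1 + x 2 / 2, x 0 - x 2 / 2, x 1 - x 2 / 2, x 2 / 2] k)
    (fun x hx k => ?_) (fun x => ?_) (fun x => ?_)
  · fin_cases k <;> norm_num [mem_polyhedronP_iff, Matrix.cons_val_two]
  · rw [mem_polyhedronP_iff] at hx
    fin_cases k <;> simp <;> linarith
  · simp [Fin.sum_univ_succ]; ring
  · ext i; fin_cases i <;> simp [Fin.sum_univ_succ]

theorem Qex_eq_polyhedron : Qex = polyhedron normalsQ boundsQ 1 := by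
  have hQ : Qex = convexHull ℝ (Set.range ![![0, 0], ![1, 0], ![0, 1]]) := by
    simp only [Qex, Matrix.range_cons, Matrix.range_empty, Set.union_empty, Set.singleton_union]
  rw [hQ]
  refine convexHull_eq_polyhedron _ (fun k => ?_) (fun k x => ![1 - x 0 - x 1, x 0, x 1] k)
    (fun x hx k => ?_) (fun x => ?_) (fun x => ?_)
  · fin_cases k <;> norm_num [mem_polyhedronQ_iff]
  · rw [mem_polyhedronQ_iff] at hx
    fin_cases k <;> simp <;> linarith
  · simp [Fin.sum_univ_succ]
  · ext i; fin_cases i <;> simp [Fin.sum_univ_succ]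

theorem normalsP_row_ne_zero : ∀ j, ∃ i : Fin 3, normalsP j i ≠ 0 := fun j => by
  fin_cases j <;> decide

theorem normalsQ_row_ne_zero : ∀ j, ∃ i : Fin 2, normalsQ j i ≠ 0 := fun j => by
  fin_cases j <;> decide

theorem isLeast_codegSet_Pex : IsLeast (codegSet Pex) 2 := by
  simp only [IsLeast, lowerBounds, Pex_eq_polyhedron,
    mem_codegSet_polyhedron_iff normalsP_row_ne_zero]
  refine ⟨⟨two_pos, 1, by decide⟩, ?_⟩
  rintro c ⟨hc, z, hz⟩
  simp [Fin.forall_fin_succ, Fin.sum_univ_succ, normalsP, boundsP] at hz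
  omega

theorem isLeast_codegSet_Qex : IsLeast (codegSet Qex) 3 := by
  simp only [IsLeast, lowerBounds, Qex_eq_polyhedron,
    mem_codegSet_polyhedron_iff normalsQ_row_ne_zero]
  refine ⟨⟨three_pos, 1, by decide⟩, ?_⟩
  rintro c ⟨hc, z, hz⟩
  simp [Fin.forall_fin_succ, Fin.sum_univ_succ, normalsQ, boundsQ] at hz
  omega

theorem isLevel_Pex : IsLevel Pex 2 := by
  rw [Pex_eq_polyhedron]
  refine isLevel_polyhedron normalsP_row_ne_zero ⟨0, by simp [mem_polyhedronP_iff]⟩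
    (fun x hx => ?_) 1 (by decide)
  obtain ⟨h₀, h₁, h₂, h₃⟩ := mem_polyhedronP_iff.1 hx
  ext i
  fin_cases i <;> simp <;> linarith

theorem isLevel_Qex : IsLevel Qex 3 := by
  rw [Qex_eq_polyhedron]
  refine isLevel_polyhedron normalsQ_row_ne_zero ⟨0, by simp [mem_polyhedronQ_iff]⟩
    (fun x hx => ?_) 1 (by decide)
  obtain ⟨h₀, h₁, h₂⟩ := mem_polyhedronQ_iff.1 hx
  ext i
  fin_cases i <;> simp <;> linarith

theorem prodSet_Pex_Qex :
    prodSet Pex Qex =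
      polyhedron (fromBlocks normalsP 0 0 normalsQ) (Sum.elim boundsP boundsQ) 1 := by
  rw [Pex_eq_polyhedron, Qex_eq_polyhedron, prodSet_polyhedron]

theorem fromBlocks_normals_row_ne_zero :
    ∀ j, ∃ i : Fin 3 ⊕ Fin 2, fromBlocks normalsP 0 0 normalsQ j i ≠ 0 := fun j => by
  fin_cases j <;> decide

theorem intCast_mem_interior_smul_prodSet_iff {n : ℕ} (hn : 0 < n) {z : Fin 3 ⊕ Fin 2 → ℤ} :
    (fun i => (z i : ℝ)) ∈ interior ((n : ℝ) • prodSet Pex Qex) ↔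
      ∀ j, ∑ i, fromBlocks normalsP 0 0 normalsQ j i * z i < n * Sum.elim boundsP boundsQ j := by
  rw [prodSet_Pex_Qex, smul_polyhedron (Nat.cast_pos.2 hn), mul_one,
    intCast_mem_interior_polyhedron_iff fromBlocks_normals_row_ne_zero]

theorem isLeast_codegSet_prodSet : IsLeast (codegSet (prodSet Pex Qex)) 3 := by
  refine ⟨⟨three_pos, 1, (intCast_mem_interior_smul_prodSet_iff three_pos).2 (by decide)⟩, ?_⟩
  rintro c ⟨hc, z, hz⟩
  have hQ := fun j => (intCast_mem_interior_smul_prodSet_iff hc).1 hz (Sum.inr j)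
  simp [Fin.forall_fin_succ, Fintype.sum_sum_type, Fin.sum_univ_succ, normalsQ, boundsQ] at hQ
  omega

theorem zex_mem_interior : (fun i => (zex i : ℝ)) ∈ interior ((4 : ℝ) • prodSet Pex Qex) := by
  exact_mod_cast (intCast_mem_interior_smul_prodSet_iff (n := 4) four_pos).2 (by decide)

-- Only the coordinates in `ℝ³` matter: `(2,2,2)` is not an interior lattice point of `3P` plus a
-- lattice point of `P`.
theorem not_exists_decomposition_zex : ¬ ∃ y w : Fin 3 ⊕ Fin 2 → ℤ,
    (fun i => (y i : ℝ)) ∈ interior ((3 : ℝ) • prodSet Pex Qex) ∧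
    (fun i => (w i : ℝ)) ∈ prodSet Pex Qex ∧ zex = y + w := by
  rintro ⟨y, w, hy, hw, hzw⟩
  have hyP := fun j => (intCast_mem_interior_smul_prodSet_iff (n := 3) three_pos).1
    (by exact_mod_cast hy) (Sum.inl j)
  have hwP := fun j => (intCast_mem_polyhedron_iff (n := 1)).1
    (by simpa [prodSet_Pex_Qex] using hw) (Sum.inl j)
  have hsum := fun i => congrFun hzw (Sum.inl i)
  simp [Fin.forall_fin_succ, Fintype.sum_sum_type, Fin.sum_univ_succ, normalsP, boundsP, zex]
    at hyP hwP hsum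
  omega

theorem not_isLevel_prodSet : ¬ IsLevel (prodSet Pex Qex) 3 := fun h => by
  obtain ⟨y, w, hy, hw, hzw⟩ := h 4 zex (by norm_num) (by exact_mod_cast zex_mem_interior)
  exact not_exists_decomposition_zex ⟨y, w, by exact_mod_cast hy, by simpa using hw, hzw⟩

/-- `P` and `Q` are both level, but the product `P × Q` has codegree 3 and is not
level: the point `(2,2,2,2,1)` is an interior lattice point of `4(P×Q)` that admits no
decomposition into an interior lattice point of `3(P×Q)` plus a lattice point of
`P × Q`. -/
theorem stmt_18 :
    (∀ r : ℕ, IsLeast (codegSet Pex) r → IsLevel Pex r) ∧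
    (∀ r : ℕ, IsLeast (codegSet Qex) r → IsLevel Qex r) ∧
    IsLeast (codegSet (prodSet Pex Qex)) 3 ∧
    (fun i => (zex i : ℝ)) ∈ interior ((4 : ℝ) • prodSet Pex Qex) ∧
    (¬ ∃ y w : Fin 3 ⊕ Fin 2 → ℤ,
        (fun i => (y i : ℝ)) ∈ interior ((3 : ℝ) • prodSet Pex Qex) ∧
        (fun i => (w i : ℝ)) ∈ prodSet Pex Qex ∧ zex = y + w) ∧
    ¬ IsLevel (prodSet Pex Qex) 3 :=
  ⟨fun _ hr => hr.unique isLeast_codegSet_Pex ▸ isLevel_Pex,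
    fun _ hr => hr.unique isLeast_codegSet_Qex ▸ isLevel_Qex,
    isLeast_codegSet_prodSet, zex_mem_interior, not_exists_decomposition_zex,
    not_isLevel_prodSet⟩
end
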